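/- arXiv:2312.12615 — 10 statements merged into one kernel-verified Lean document; each statement's English description precedes it below -/
import Mathlib

section
/- Let d and n be nonnegative integers, let (T_i)_{i<d} be a d-tuple of pairwise disjoint chains (linearly ordered sets), let P be a (nonempty) subposet of the product poset ∏_{i<d} T_i, and let (M_j)_{j<n} be an n-tuple of pairwise disjoint subsets of ⋃_{i<d} T_i such that: for every comparable pair of elements p ≤ p' in P and every j < n, there exists i < d such that the i-th coordinates of p and p' are equal and their common value lies in M_j. Then for any n-tuple of chains (C_j)_{j<n}, dim(P × ∏_{j<n} C_j) ≤ d. -/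
universe u

/-- The order dimension of a poset: the least cardinal `κ` such that the partial
order is the intersection of `κ` linear orderings (each extending it). -/
noncomputable def orderDim (α : Type u) [PartialOrder α] : Cardinal.{u} :=
  sInf {κ : Cardinal.{u} | ∃ (ι : Type u) (r : ι → α → α → Prop),
    (∀ i, IsLinearOrder α (r i)) ∧
    (∀ x y : α, x ≤ y ↔ ∀ i, r i x y) ∧
    Cardinal.mk ι = κ}

/-!
For each coordinate `i`, order `P × ∏ C` lexicographically: first by the `i`-th coordinate `t`
of the `P`-component, then (when `(i, t) ∈ M j`) by the `j`-th `C`-coordinate, and finally by a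
fixed linear extension of the product order. Each of these `d` linear orders extends the
product order. Conversely, if `x` precedes `y` in all of them, then `x.1 ≤ y.1`, so for each
`j` some coordinate `i` of `x.1` and `y.1` agrees with value in `M j`, and the `i`-th order
compares the `j`-th `C`-coordinates; disjointness of the `M j` ensures that no other
`C`-coordinate is compared first.
-/

theorem orderDim_le_of_forall_le_iff {α ι : Type u} [PartialOrder α] (r : ι → α → α → Prop)
    (hr : ∀ i, IsLinearOrder α (r i)) (h : ∀ x y, x ≤ y ↔ ∀ i, r i x y) :
    orderDim α ≤ Cardinal.mk ι :=
  csInf_le' ⟨ι, r, hr, h, rfl⟩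

theorem isLinearOrder_of_injective {α β : Type*} [LinearOrder β] {f : α → β}
    (hf : Function.Injective f) : IsLinearOrder α (fun x y => f x ≤ f y) :=
  RelEmbedding.isLinearOrder (s := (· ≤ ·)) ⟨⟨f, hf⟩, Iff.rfl⟩

section CoordKey

variable {ι κ : Type*} {T : ι → Type*} {C : κ → Type*}

open Classical in
noncomputable def maskedCoords (M : κ → Set (Σ i, T i)) (i : ι) (t : T i) (c : ∀ j, C j) :
    Lex (∀ j, WithBot (C j)) :=
  toLex fun j => if (⟨i, t⟩ : Σ i, T i) ∈ M j then (c j : WithBot (C j)) else ⊥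

section MaskedCoords

variable [∀ j, LinearOrder (C j)] [LinearOrder κ] [WellFoundedLT κ]

theorem maskedCoords_mono (M : κ → Set (Σ i, T i)) (i : ι) (t : T i) :
    Monotone (maskedCoords (C := C) M i t) := fun c c' h =>
  Pi.toLex_monotone fun j => by
    split_ifs
    · exact WithBot.coe_le_coe.2 (h j)
    · exact le_rfl

theorem maskedCoords_le_iff {M : κ → Set (Σ i, T i)} (hM : Pairwise (Function.onFun Disjoint M))
    {i : ι} {t : T i} {j : κ} (hj : (⟨i, t⟩ : Σ i, T i) ∈ M j) {c c' : ∀ j, C j} :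
    maskedCoords M i t c ≤ maskedCoords M i t c' ↔ c j ≤ c' j := by
  classical
  have hupdate : ∀ c : ∀ j, C j,
      maskedCoords M i t c = toLex (Function.update ⊥ j (c j : WithBot (C j))) := by
    intro c
    refine congrArg toLex (funext fun k => ?_)
    by_cases hk : k = j
    · subst hk
      simp [hj]
    · simp [Function.update_of_ne hk, Set.disjoint_right.mp (hM hk) hj]
  rw [hupdate, hupdate,
    ← Function.update_idem (β := fun k => WithBot (C k)) (c j : WithBot (C j)) (c' j) ⊥,
    Pi.le_toLex_update_self_iff, Function.update_self, WithBot.coe_le_coe]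

end MaskedCoords

variable [∀ i, LinearOrder (T i)] [∀ j, LinearOrder (C j)] {P : Set (∀ i, T i)}

noncomputable def coordKey (M : κ → Set (Σ i, T i)) (i : ι) (x : P × ∀ j, C j) :
    T i ×ₗ (Lex (∀ j, WithBot (C j)) ×ₗ LinearExtension (P × ∀ j, C j)) :=
  toLex (x.1.1 i, toLex (maskedCoords M i (x.1.1 i) x.2, toLinearExtension x))

theorem coordKey_injective (M : κ → Set (Σ i, T i)) (i : ι) :
    Function.Injective (coordKey (P := P) (C := C) M i) := fun _ _ h =>
  congrArg (fun k => (ofLex (ofLex k).2).2) h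

variable [LinearOrder κ] [WellFoundedLT κ]

theorem coordKey_mono (M : κ → Set (Σ i, T i)) (i : ι) :
    Monotone (coordKey (P := P) (C := C) M i) := by
  intro x y h
  rw [coordKey, coordKey, Prod.Lex.le_iff]
  rcases (h.1 i).lt_or_eq with hlt | heq
  · exact Or.inl hlt
  · refine Or.inr ⟨heq, Prod.Lex.toLex_mono ⟨?_, toLinearExtension.monotone h⟩⟩
    rw [heq]
    exact maskedCoords_mono M i _ h.2

theorem le_of_forall_coordKey_le {M : κ → Set (Σ i, T i)}
    (hM : Pairwise (Function.onFun Disjoint M))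
    (hcond : ∀ p ∈ P, ∀ p' ∈ P, p ≤ p' →
      ∀ j : κ, ∃ i : ι, p i = p' i ∧ (⟨i, p i⟩ : Σ i, T i) ∈ M j)
    {x y : P × ∀ j, C j} (h : ∀ i, coordKey M i x ≤ coordKey M i y) : x ≤ y := by
  have hP : x.1 ≤ y.1 := fun i => Prod.Lex.monotone_fst _ _ (h i)
  refine ⟨hP, fun j => ?_⟩
  obtain ⟨i, heq, hmem⟩ := hcond _ x.1.2 _ y.1.2 hP j
  have hi := h i
  rw [coordKey, coordKey, Prod.Lex.le_iff] at hi
  rcases hi with hlt | ⟨-, hle⟩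
  · exact absurd heq hlt.ne
  · have hmasked := Prod.Lex.monotone_fst _ _ hle
    rw [ofLex_toLex, ofLex_toLex, ← heq] at hmasked
    exact (maskedCoords_le_iff hM hmem).1 hmasked

end CoordKey

theorem stmt0_general (d n : ℕ) (T : Fin d → Type) [∀ i, LinearOrder (T i)]
    (P : Set (∀ i, T i))
    (M : Fin n → Set (Σ i, T i))
    (hMdisj : Pairwise (Function.onFun Disjoint M))
    (hcond : ∀ p ∈ P, ∀ p' ∈ P, p ≤ p' →
      ∀ j : Fin n, ∃ i : Fin d, p i = p' i ∧ (⟨i, p i⟩ : Σ i, T i) ∈ M j)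
    (C : Fin n → Type) [∀ j, LinearOrder (C j)] :
    orderDim (↥P × ∀ j, C j) ≤ d := by
  have key := orderDim_le_of_forall_le_iff
    (fun i (x y : ↥P × ∀ j, C j) => coordKey M i x ≤ coordKey M i y)
    (fun i => isLinearOrder_of_injective (coordKey_injective M i))
    (fun _ _ => ⟨fun h i => coordKey_mono M i h, le_of_forall_coordKey_le hMdisj hcond⟩)
  simpa only [Cardinal.mk_fin] using key

theorem stmt0 (d n : ℕ) (T : Fin d → Type) [∀ i, LinearOrder (T i)]
    [∀ i, Nonempty (T i)]
    (P : Set (∀ i, T i)) (hP : P.Nonempty)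
    (M : Fin n → Set (Σ i, T i))
    (hMdisj : Pairwise (Function.onFun Disjoint M))
    (hcond : ∀ p ∈ P, ∀ p' ∈ P, p ≤ p' →
      ∀ j : Fin n, ∃ i : Fin d, p i = p' i ∧ (⟨i, p i⟩ : Σ i, T i) ∈ M j)
    (C : Fin n → Type) [∀ j, LinearOrder (C j)] [∀ j, Nonempty (C j)] :
    orderDim (↥P × ∀ j, C j) ≤ d :=
  stmt0_general d n T P M hMdisj hcond C
end

section
/- Let d ≥ 3 and let P be any subposet of 2^d \ {0, 1} (the d-cube with its top and bottom elements removed) that contains the standard example S_d (realized in 2^d by sending a_i to the d-tuple with 1 in the i-th coordinate and 0 elsewhere, and b_i to the d-tuple with 0 in the i-th coordinate and 1 elsewhere). Then for any two chains C_0 and C_1, dim(P × C_0 × C_1) = d = dim(P). -/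
universe u

/-- The element `a_i` of the standard example, realized in the `d`-cube:
`1` in the `i`-th coordinate and `0` elsewhere. -/
def cubeA (d : ℕ) (i : Fin d) : Fin d → Bool := fun k => decide (k = i)

/-- The element `b_i` of the standard example, realized in the `d`-cube:
`0` in the `i`-th coordinate and `1` elsewhere. -/
def cubeB (d : ℕ) (i : Fin d) : Fin d → Bool := fun k => decide (k ≠ i)

/-- The standard example `S_d`, realized as a subset of the `d`-cube. -/
def stdExSet (d : ℕ) : Set (Fin d → Bool) := Set.range (cubeA d) ∪ Set.range (cubeB d)

/-!
A poset has a realizer of size `κ` as soon as it embeds into a product of `κ` chains: refine each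
coordinate by a fixed linear extension. The coordinates of `2^d` give `dim P ≤ d`. For the product,
coordinate `i` of `(x, c₀, c₁)` is `x i`, refined by `c₀` where `x i = 0` and by `c₁` where
`x i = 1`; since `x ∉ {0, 1}` has coordinates of both kinds, these `d` chains still realize
`P × C₀ × C₁`. Conversely `P` contains `S_d`, whose dimension is `d`, and `P` embeds into
`P × C₀ × C₁`.
-/

open Cardinal Function

section OrderDim

variable {α β : Type u} [PartialOrder α] [PartialOrder β]

def realizerCards (α : Type u) [PartialOrder α] : Set Cardinal.{u} :=
  {κ | ∃ (ι : Type u) (r : ι → α → α → Prop), (∀ i, IsLinearOrder α (r i)) ∧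
    (∀ x y : α, x ≤ y ↔ ∀ i, r i x y) ∧ #ι = κ}

theorem mk_mem_realizerCards {ι : Type u} {T : ι → Type*} [∀ i, LinearOrder (T i)]
    (f : α → ∀ i, T i) (hf : ∀ x y, x ≤ y ↔ ∀ i, f x i ≤ f y i) : #ι ∈ realizerCards α := by
  let g (i : ι) (x : α) : T i ×ₗ LinearExtension α := toLex (f x i, toLinearExtension x)
  have hg (i : ι) : Injective (g i) := fun x y h => congrArg (fun p => (ofLex p).2) h
  refine ⟨ι, fun i => (· ≤ ·) on g i, fun i => (hg i).isLinearOrder_onFun _, fun x y => ?_, rfl⟩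
  simp only [Function.onFun, g, Prod.Lex.toLex_le_toLex']
  exact ⟨fun h i => ⟨(hf x y).1 h i, fun _ => toLinearExtension.monotone h⟩,
    fun h => (hf x y).2 fun i => (h i).1⟩

theorem orderDim_le_mk {ι : Type u} {T : ι → Type*} [∀ i, LinearOrder (T i)]
    (f : α → ∀ i, T i) (hf : ∀ x y, x ≤ y ↔ ∀ i, f x i ≤ f y i) : orderDim α ≤ #ι :=
  csInf_le' (mk_mem_realizerCards f hf)

theorem realizerCards_nonempty (α : Type u) [PartialOrder α] : (realizerCards α).Nonempty := by
  classical
  refine ⟨_, mk_mem_realizerCards (fun x a => decide (a ≤ x)) fun x y => ?_⟩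
  simp only [Bool.le_iff_imp, decide_eq_true_eq]
  exact ⟨fun h a hax => hax.trans h, fun h => h x le_rfl⟩

theorem realizerCards_subset_of_orderEmbedding (e : α ↪o β) :
    realizerCards β ⊆ realizerCards α := by
  rintro _ ⟨ι, r, hlin, hiff, rfl⟩
  exact ⟨ι, fun i => r i on e, fun i => have := hlin i; e.injective.isLinearOrder_onFun _,
    fun x y => e.le_iff_le.symm.trans (hiff _ _), rfl⟩

theorem OrderEmbedding.orderDim_le (e : α ↪o β) : orderDim α ≤ orderDim β :=
  csInf_le_csInf (OrderBot.bddBelow _) (realizerCards_nonempty β)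
    (realizerCards_subset_of_orderEmbedding e)

theorem orderDim_subtype_pi_le {ι : Type u} {T : ι → Type u} [∀ i, LinearOrder (T i)]
    (S : Set (∀ i, T i)) : orderDim S ≤ #ι :=
  orderDim_le_mk (fun x => (x : ∀ i, T i)) fun _ _ => Iff.rfl

def IsStandardExample {κ : Type*} (a b : κ → α) : Prop :=
  ∀ i j, a i ≤ b j ↔ i ≠ j

/-- A linear order reversing both `a i ≤ b i` and `a j ≤ b j` with `i ≠ j` is impossible:
it would contain `a i ≤ b j ≤ a j ≤ b i`. -/
theorem IsStandardExample.mk_le_orderDim {κ : Type u} {a b : κ → α}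
    (h : IsStandardExample a b) : #κ ≤ orderDim α := by
  refine le_csInf (realizerCards_nonempty α) ?_
  rintro _ ⟨ι, r, hlin, hiff, rfl⟩
  have hrev (i : κ) : ∃ k, ¬ r k (a i) (b i) := by
    by_contra! hall
    exact (h i i).1 ((hiff _ _).2 hall) rfl
  choose k hk using hrev
  refine mk_le_of_injective (f := k) fun i j hij => by_contra fun hne => hk i ?_
  have := hlin (k i)
  have hba : r (k i) (b j) (a j) := by
    rw [hij]
    exact (total_of (r (k j)) _ _).resolve_left (hk j)
  exact trans_of _ ((hiff _ _).1 ((h i j).2 hne) _)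
    (trans_of _ hba ((hiff _ _).1 ((h j i).2 (Ne.symm hne)) _))

end OrderDim

section BoolMark

variable {γ δ : Type*} [LinearOrder γ] [LinearOrder δ]

def boolMark (a : Bool) (c : γ) (e : δ) : Bool ×ₗ (γ ⊕ₗ δ) :=
  toLex (a, toLex (cond a (.inr e) (.inl c)))

theorem forall_boolMark_le_iff {ι : Type*} {x y : ι → Bool} (hx : x ≠ ⊥) (hy : y ≠ ⊤)
    {c c' : γ} {e e' : δ} :
    (∀ i, boolMark (x i) c e ≤ boolMark (y i) c' e') ↔ x ≤ y ∧ c ≤ c' ∧ e ≤ e' := by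
  simp only [boolMark, Prod.Lex.toLex_le_toLex']
  constructor
  · intro h
    have hxy : x ≤ y := fun i => (h i).1
    refine ⟨hxy, ?_, ?_⟩
    · obtain ⟨j, hj⟩ := ne_iff.1 hy
      have hyj : y j = false := by simpa using hj
      have hxj : x j = false := by simpa [hyj, Bool.le_iff_imp] using hxy j
      simpa [hxj, hyj] using (h j).2 (hxj.trans hyj.symm)
    · obtain ⟨j, hj⟩ := ne_iff.1 hx
      have hxj : x j = true := by simpa using hj
      have hyj : y j = true := by simpa [hxj, Bool.le_iff_imp] using hxy j
      simpa [hxj, hyj] using (h j).2 (hxj.trans hyj.symm)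
  · rintro ⟨hxy, hc, he⟩ i
    refine ⟨hxy i, fun hi => ?_⟩
    rw [hi]
    cases y i <;> simpa

end BoolMark

theorem orderDim_subtype_prod_prod_le {ι : Type u} (S : Set (ι → Bool))
    (hS : S ⊆ {x | x ≠ ⊥ ∧ x ≠ ⊤}) (γ δ : Type u) [LinearOrder γ] [LinearOrder δ] :
    orderDim (S × γ × δ) ≤ #ι :=
  orderDim_le_mk (fun p i => boolMark (p.1.1 i) p.2.1 p.2.2) fun p q =>
    (forall_boolMark_le_iff (hS p.1.2).1 (hS q.1.2).2).symm

theorem cubeA_le_cubeB_iff {d : ℕ} {i j : Fin d} : cubeA d i ≤ cubeB d j ↔ i ≠ j := by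
  refine ⟨fun h hij => ?_, fun hij k => ?_⟩
  · simpa [cubeA, cubeB, hij, Bool.le_iff_imp] using h i
  · simp only [cubeA, cubeB, Bool.le_iff_imp, decide_eq_true_eq]
    rintro rfl
    exact hij

theorem stmt2_general (d : ℕ) (P : Set (Fin d → Bool))
    (hSd : stdExSet d ⊆ P)
    (hP : P ⊆ {x | x ≠ (fun _ => false) ∧ x ≠ (fun _ => true)})
    (C₀ C₁ : Type) [LinearOrder C₀] [Nonempty C₀] [LinearOrder C₁] [Nonempty C₁] :
    orderDim (↥P × C₀ × C₁) = d ∧ orderDim ↥P = d := by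
  obtain ⟨c₀⟩ := ‹Nonempty C₀›
  obtain ⟨c₁⟩ := ‹Nonempty C₁›
  have hupper : orderDim (↥P × C₀ × C₁) ≤ d := by
    simpa using orderDim_subtype_prod_prod_le P hP C₀ C₁
  have hstd : IsStandardExample (α := P) (fun i => ⟨cubeA d i, hSd (.inl ⟨i, rfl⟩)⟩)
      (fun i => ⟨cubeB d i, hSd (.inr ⟨i, rfl⟩)⟩) := fun _ _ => cubeA_le_cubeB_iff
  have hlower : (d : Cardinal) ≤ orderDim P := by simpa using hstd.mk_le_orderDim
  have hembed : orderDim P ≤ orderDim (↥P × C₀ × C₁) :=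
    (OrderEmbedding.ofMapLEIff (fun x => (x, c₀, c₁)) fun _ _ => by simp).orderDim_le
  exact ⟨le_antisymm hupper (hlower.trans hembed), le_antisymm (hembed.trans hupper) hlower⟩

theorem stmt2 (d : ℕ) (hd : 3 ≤ d) (P : Set (Fin d → Bool))
    (hSd : stdExSet d ⊆ P)
    (hP : P ⊆ {x | x ≠ (fun _ => false) ∧ x ≠ (fun _ => true)})
    (C₀ C₁ : Type) [LinearOrder C₀] [Nonempty C₀] [LinearOrder C₁] [Nonempty C₁] :
    orderDim (↥P × C₀ × C₁) = d ∧ orderDim ↥P = d :=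
  stmt2_general d P hSd hP C₀ C₁
end

section
/- Suppose d ≥ 1 and (T_i)_{i<d} is a family of chains, each T_i having a least element 0_i, and P is a (nonempty) subposet of ∏_{i<d} T_i consisting of elements each of which has at least one coordinate equal to some 0_i. Then for any chain C, dim(P × C) ≤ d. The analogous statement holds with least elements replaced by greatest elements. -/
universe u

theorem key_lemma (d : ℕ) (T : Fin d → Type) [∀ i, LinearOrder (T i)]
    (P : Set (∀ i, T i)) (C : Type) [LinearOrder C]
    (h : ∀ p ∈ P, ∀ q ∈ P, (∀ i, p i ≤ q i) → ∃ i, p i = q i) :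
    orderDim (↥P × C) ≤ d := by
  obtain ⟨s, hs, hext⟩ := extend_partialOrder ((· ≤ ·) : ↥P → ↥P → Prop)
  apply csInf_le'
  refine ⟨Fin d, fun i x y =>
    x.1.1 i < y.1.1 i ∨ (x.1.1 i = y.1.1 i ∧ (x.2 < y.2 ∨ (x.2 = y.2 ∧ s x.1 y.1))),
    fun i => ?_, fun x y => ?_, Cardinal.mk_fin d⟩
  · refine @IsLinearOrder.mk _ _
      (@IsPartialOrder.mk _ _
        (@IsPreorder.mk _ _ ⟨fun x => Or.inr ⟨rfl, Or.inr ⟨rfl, hs.refl x.1⟩⟩⟩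
          ⟨fun x y z hxy hyz => ?_⟩)
        ⟨fun x y hxy hyx => ?_⟩)
      ⟨fun x y => ?_⟩
    · -- trans
      rcases hxy with h1 | ⟨e1, h1⟩
      · rcases hyz with h2 | ⟨e2, h2⟩
        · exact Or.inl (h1.trans h2)
        · exact Or.inl (e2 ▸ h1)
      · rcases hyz with h2 | ⟨e2, h2⟩
        · exact Or.inl (e1 ▸ h2)
        · refine Or.inr ⟨e1.trans e2, ?_⟩
          rcases h1 with h1 | ⟨f1, h1⟩
          · rcases h2 with h2 | ⟨f2, h2⟩
            · exact Or.inl (h1.trans h2)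
            · exact Or.inl (f2 ▸ h1)
          · rcases h2 with h2 | ⟨f2, h2⟩
            · exact Or.inl (f1 ▸ h2)
            · exact Or.inr ⟨f1.trans f2, hs.trans _ _ _ h1 h2⟩
    · -- antisymm
      rcases hxy with h1 | ⟨e1, h1⟩
      · rcases hyx with h2 | ⟨e2, h2⟩
        · exact absurd (h1.trans h2) (lt_irrefl _)
        · exact absurd h1 (e2 ▸ lt_irrefl _)
      · rcases hyx with h2 | ⟨e2, h2⟩
        · exact absurd h2 (e1 ▸ lt_irrefl _)
        · rcases h1 with h1 | ⟨f1, h1⟩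
          · rcases h2 with h2 | ⟨f2, h2⟩
            · exact absurd (h1.trans h2) (lt_irrefl _)
            · exact absurd h1 (f2 ▸ lt_irrefl _)
          · rcases h2 with h2 | ⟨f2, h2⟩
            · exact absurd h2 (f1 ▸ lt_irrefl _)
            · exact Prod.ext (hs.antisymm _ _ h1 h2) f1
    · -- total
      rcases lt_trichotomy (x.1.1 i) (y.1.1 i) with hc | hc | hc
      · exact Or.inl (Or.inl hc)
      · rcases lt_trichotomy x.2 y.2 with hd | hd | hd
        · exact Or.inl (Or.inr ⟨hc, Or.inl hd⟩)
        · rcases hs.total x.1 y.1 with ht | ht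
          · exact Or.inl (Or.inr ⟨hc, Or.inr ⟨hd, ht⟩⟩)
          · exact Or.inr (Or.inr ⟨hc.symm, Or.inr ⟨hd.symm, ht⟩⟩)
        · exact Or.inr (Or.inr ⟨hc.symm, Or.inl hd⟩)
      · exact Or.inr (Or.inl hc)
  · constructor
    · rintro ⟨h1, h2⟩ i
      rcases lt_or_eq_of_le (h1 i) with hc | hc
      · exact Or.inl hc
      · refine Or.inr ⟨hc, ?_⟩
        rcases lt_or_eq_of_le h2 with hd | hd
        · exact Or.inl hd
        · exact Or.inr ⟨hd, hext _ _ h1⟩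
    · intro hr
      have h1 : x.1 ≤ y.1 := by
        intro i
        rcases hr i with hc | ⟨hc, _⟩
        · exact hc.le
        · exact hc.le
      obtain ⟨j, hj⟩ := h x.1.1 x.1.2 y.1.1 y.1.2 h1
      have h2 : x.2 ≤ y.2 := by
        rcases hr j with hc | ⟨_, hc | ⟨hc, _⟩⟩
        · exact absurd hc (hj ▸ lt_irrefl _)
        · exact hc.le
        · exact hc.le
      exact ⟨h1, h2⟩

theorem stmt3 (d : ℕ) (hd : 1 ≤ d) (T : Fin d → Type) [∀ i, LinearOrder (T i)]
    [∀ i, Nonempty (T i)]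
    (P : Set (∀ i, T i)) (hP : P.Nonempty)
    (C : Type) [LinearOrder C] [Nonempty C] :
    ((∀ i, ∃ b : T i, IsBot b) → (∀ p ∈ P, ∃ i, IsBot (p i)) →
      orderDim (↥P × C) ≤ d) ∧
    ((∀ i, ∃ t : T i, IsTop t) → (∀ p ∈ P, ∃ i, IsTop (p i)) →
      orderDim (↥P × C) ≤ d) := by
  constructor
  · intro _ hbot
    refine key_lemma d T P C fun p hp q hq hle => ?_
    obtain ⟨i, hi⟩ := hbot q hq
    exact ⟨i, le_antisymm (hle i) (hi (p i))⟩
  · intro _ htop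
    refine key_lemma d T P C fun p hp q hq hle => ?_
    obtain ⟨i, hi⟩ := htop p hp
    exact ⟨i, le_antisymm (hle i) (hi (q i))⟩
end

section
/- Let d ≥ 3 and let P be any subposet of 2^d \ {1} (the d-cube with its top element removed) containing the standard example S_d (realized in 2^d by sending a_i to the d-tuple with 1 in the i-th coordinate and 0 elsewhere, and b_i to the d-tuple with 0 in the i-th coordinate and 1 elsewhere); for example, P = S_d ∪ {0}. Then for any chain C, dim(P × C) = d = dim(P). -/
universe u

/-!
`P` lies in the cube `2^d`, a product of `d` chains, and `P × C` embeds into the product of `d`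
copies of the lexicographic chain `2 ×ₗ C`: no element of `P` is the top of the cube, so each has
a coordinate `0`, where the lexicographic comparison falls through to `C`. Either embedding yields
`d` linear extensions realizing the order. Conversely `S_d ⊆ P` (and `S_d × {c} ⊆ P × C`) needs
`d` of them, since one linear extension can reverse only one of the incomparable pairs
`(a_i, b_i)`.
-/

open Cardinal

section Realizer

variable {α : Type u} [PartialOrder α]

theorem exists_realizer_of_orderEmbedding {ι : Type*} {β : ι → Type*} [∀ i, LinearOrder (β i)]
    (f : α ↪o ∀ i, β i) :
    ∃ r : ι → α → α → Prop, (∀ i, IsLinearOrder α (r i)) ∧ ∀ x y, x ≤ y ↔ ∀ i, r i x y := by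
  -- each coordinate order is made linear by breaking its ties with a fixed linear extension
  let g : ∀ i, α → β i ×ₗ LinearExtension α := fun i x => toLex (f x i, toLinearExtension x)
  have hg : ∀ i, Function.Injective (g i) := fun i x y h => congrArg (fun p => (ofLex p).2) h
  refine ⟨fun i => Function.onFun (· ≤ ·) (g i),
    fun i => (hg i).isLinearOrder_onFun (r := (· ≤ ·)), fun x y => ?_⟩
  simp only [Function.onFun, g, Prod.Lex.toLex_le_toLex']
  exact ⟨fun h i => ⟨f.monotone h i, fun _ => toLinearExtension.monotone h⟩,
    fun h => f.le_iff_le.mp fun i => (h i).1⟩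

/-- A linear order `r l` cannot reverse two of the pairs `(A i, B i)`, `(A j, B j)`: it would give
`A i ≤ B j ≤ A j ≤ B i`. -/
theorem card_le_of_realizer_of_standardExample {ι κ : Type u} (r : ι → α → α → Prop)
    (hr : ∀ i, IsLinearOrder α (r i)) (hle : ∀ x y, x ≤ y ↔ ∀ i, r i x y)
    (A B : κ → α) (hAB : ∀ i j, i ≠ j → A i ≤ B j) (hAB' : ∀ i, ¬ A i ≤ B i) :
    #κ ≤ #ι := by
  have hrev : ∀ k, ∃ l, ¬ r l (A k) (B k) := fun k => by
    simpa only [hle, not_forall] using hAB' k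
  choose t ht using hrev
  refine mk_le_of_injective (f := t) fun i j hij => by_contra fun hne => ht i ?_
  have hBA : r (t i) (B j) (A j) := ((hr _).total _ _).resolve_left (hij ▸ ht j)
  exact (hr _).trans _ _ _ ((hr _).trans _ _ _ ((hle _ _).1 (hAB i j hne) _) hBA)
    ((hle _ _).1 (hAB j i (Ne.symm hne)) _)

theorem orderDim_eq_card_of_orderEmbedding {ι : Type u} {β : ι → Type*}
    [∀ i, LinearOrder (β i)] (f : α ↪o ∀ i, β i)
    (A B : ι → α) (hAB : ∀ i j, i ≠ j → A i ≤ B j) (hAB' : ∀ i, ¬ A i ≤ B i) :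
    orderDim α = #ι := by
  obtain ⟨r, hr, hle⟩ := exists_realizer_of_orderEmbedding f
  unfold orderDim
  refine le_antisymm (csInf_le' ⟨ι, r, hr, hle, rfl⟩) (le_csInf ⟨_, ι, r, hr, hle, rfl⟩ ?_)
  rintro _ ⟨κ, s, hs, hsle, rfl⟩
  exact card_le_of_realizer_of_standardExample s hs hsle A B hAB hAB'

end Realizer

/-- At a coordinate where the larger element is minimal, the lexicographic comparison falls
through to the `γ`-components. -/
def OrderEmbedding.prodPiLex {α γ ι : Type*} {β : ι → Type*} [PartialOrder α] [PartialOrder γ]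
    [∀ i, PartialOrder (β i)] (f : α ↪o ∀ i, β i) (hmin : ∀ x, ∃ k, IsMin (f x k)) :
    α × γ ↪o ∀ i, β i ×ₗ γ :=
  OrderEmbedding.ofMapLEIff (fun p i => toLex (f p.1 i, p.2)) fun p q => by
    simp only [Pi.le_def, Prod.Lex.toLex_le_toLex', Prod.le_def]
    refine ⟨fun h => ⟨f.le_iff_le.mp fun i => (h i).1, ?_⟩,
      fun h i => ⟨f.monotone h.1 i, fun _ => h.2⟩⟩
    obtain ⟨k, hk⟩ := hmin q.1
    exact (h k).2 (le_antisymm (h k).1 (hk (h k).1))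

theorem cubeA_le_cubeB {d : ℕ} {i j : Fin d} (h : i ≠ j) : cubeA d i ≤ cubeB d j := fun k => by
  by_cases hk : k = i <;> simp [cubeA, cubeB, hk, h]

theorem not_cubeA_le_cubeB {d : ℕ} (i : Fin d) : ¬ cubeA d i ≤ cubeB d i := fun h =>
  absurd (h i) (by simp [cubeA, cubeB])

theorem stmt4_general (d : ℕ) (P : Set (Fin d → Bool))
    (hSd : stdExSet d ⊆ P)
    (hP : P ⊆ {x | x ≠ (fun _ => true)})
    (C : Type) [LinearOrder C] [Nonempty C] :
    orderDim (↥P × C) = d ∧ orderDim ↥P = d := by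
  obtain ⟨c⟩ := ‹Nonempty C›
  let A (i : Fin d) : P := ⟨cubeA d i, hSd (Or.inl ⟨i, rfl⟩)⟩
  let B (i : Fin d) : P := ⟨cubeB d i, hSd (Or.inr ⟨i, rfl⟩)⟩
  have hAB : ∀ i j, i ≠ j → A i ≤ B j := fun _ _ => cubeA_le_cubeB
  have hAB' : ∀ i, ¬ A i ≤ B i := not_cubeA_le_cubeB
  let f : P ↪o (Fin d → Bool) := OrderEmbedding.subtype P
  have hmin : ∀ p, ∃ k, IsMin (f p k) := fun p => by
    obtain ⟨k, hk⟩ := Function.ne_iff.mp (hP p.2)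
    refine ⟨k, ?_⟩
    change IsMin (p.1 k)
    rw [Bool.eq_false_iff.mpr hk]
    exact isMin_bot
  rw [← mk_fin d]
  exact ⟨orderDim_eq_card_of_orderEmbedding (f.prodPiLex hmin) (fun i => (A i, c))
      (fun i => (B i, c)) (fun i j h => ⟨hAB i j h, le_rfl⟩) (fun i h => hAB' i h.1),
    orderDim_eq_card_of_orderEmbedding f A B hAB hAB'⟩

theorem stmt4 (d : ℕ) (hd : 3 ≤ d) (P : Set (Fin d → Bool))
    (hSd : stdExSet d ⊆ P)
    (hP : P ⊆ {x | x ≠ (fun _ => true)})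
    (C : Type) [LinearOrder C] [Nonempty C] :
    orderDim (↥P × C) = d ∧ orderDim ↥P = d :=
  stmt4_general d P hSd hP C
end

section
/- For every positive integer d, every integer a with 0 ≤ a ≤ d−1, every natural number n with n ≤ d/2, and every family of chains (C_j)_{j<n}, one has dim(P_d^{a,a+1} × ∏_{j<n} C_j) ≤ d, where P_d^{a,a+1} denotes the subposet of the d-cube 2^d consisting of those elements in which the number of coordinates equal to 1 is either a or a+1. -/
universe u

/-- The number of coordinates of an element of the `d`-cube that equal `1`. -/
def onesCount {d : ℕ} (p : Fin d → Bool) : ℕ := (Finset.univ.filter fun i => p i = true).card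

/-- `P_d^{a,b}`: the subposet of the `d`-cube `2^d` consisting of the elements
having exactly `a` or exactly `b` coordinates equal to `1`. -/
def cubeLevels (d a b : ℕ) : Set (Fin d → Bool) :=
  {p | onesCount p = a ∨ onesCount p = b}

/-- A relation equivalent to the pullback of a linear order is a linear order. -/
lemma isLinearOrder_of_map {α : Type*} {β : Type*} [LinearOrder β] (f : α → β)
    (hf : Function.Injective f) (r : α → α → Prop) (h : ∀ x y, r x y ↔ f x ≤ f y) :
    IsLinearOrder α r where
  refl a := (h a a).2 le_rfl
  trans a b c hab hbc := (h a c).2 (le_trans ((h a b).1 hab) ((h b c).1 hbc))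
  antisymm a b hab hba := hf (le_antisymm ((h a b).1 hab) ((h b a).1 hba))
  total a b := (le_total (f a) (f b)).imp (h a b).2 (h b a).2

theorem stmt5 (d : ℕ) (hd : 0 < d) (a : ℕ) (ha : a ≤ d - 1) (n : ℕ) (hn : 2 * n ≤ d)
    (C : Fin n → Type) [∀ j, LinearOrder (C j)] [∀ j, Nonempty (C j)] :
    orderDim (↥(cubeLevels d a (a + 1)) × ∀ j, C j) ≤ d := by
  set α := (↥(cubeLevels d a (a + 1)) × ∀ j, C j) with hα
  have tinj : Function.Injective (toLinearExtension : α → LinearExtension α) :=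
    fun x y hxy => hxy
  -- the `d` linear orders
  set r : Fin d → α → α → Prop := fun i x y =>
    (x.1.1 i < y.1.1 i) ∨ (x.1.1 i = y.1.1 i ∧
      ((∃ h : (i : ℕ) / 2 < n, x.2 ⟨(i : ℕ) / 2, h⟩ < y.2 ⟨(i : ℕ) / 2, h⟩) ∨
       ((∀ h : (i : ℕ) / 2 < n, x.2 ⟨(i : ℕ) / 2, h⟩ = y.2 ⟨(i : ℕ) / 2, h⟩) ∧
         toLinearExtension x ≤ toLinearExtension y))) with hr
  have hlin : ∀ i, IsLinearOrder α (r i) := by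
    intro i
    by_cases h2 : (i : ℕ) / 2 < n
    · set k : Fin n := ⟨(i : ℕ) / 2, h2⟩ with hk
      refine isLinearOrder_of_map
        (fun x => toLex ((x.1.1 i : Bool), toLex (x.2 k, toLinearExtension x))) ?_ _ ?_
      · intro x y hxy
        have h3 : toLinearExtension x = toLinearExtension y :=
          congrArg (fun z => (ofLex (ofLex z).2).2) hxy
        exact tinj h3
      · intro x y
        rw [Prod.Lex.le_iff, Prod.Lex.le_iff]
        constructor
        · rintro (h | ⟨he, (⟨_, hlt⟩ | ⟨heq, hle⟩)⟩)
          · exact Or.inl h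
          · exact Or.inr ⟨he, Or.inl hlt⟩
          · exact Or.inr ⟨he, Or.inr ⟨heq h2, hle⟩⟩
        · rintro (h | ⟨he, (hlt | ⟨heq, hle⟩)⟩)
          · exact Or.inl h
          · exact Or.inr ⟨he, Or.inl ⟨h2, hlt⟩⟩
          · exact Or.inr ⟨he, Or.inr ⟨fun _ => heq, hle⟩⟩
    · refine isLinearOrder_of_map
        (fun x => toLex ((x.1.1 i : Bool), toLinearExtension x)) ?_ _ ?_
      · intro x y hxy
        have h3 : toLinearExtension x = toLinearExtension y :=
          congrArg (fun z => (ofLex z).2) hxy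
        exact tinj h3
      · intro x y
        rw [Prod.Lex.le_iff]
        constructor
        · rintro (h | ⟨he, (⟨hh, _⟩ | ⟨_, hle⟩)⟩)
          · exact Or.inl h
          · exact absurd hh h2
          · exact Or.inr ⟨he, hle⟩
        · rintro (h | ⟨he, hle⟩)
          · exact Or.inl h
          · exact Or.inr ⟨he, Or.inr ⟨fun hh => absurd hh h2, hle⟩⟩
  have hiff : ∀ x y : α, x ≤ y ↔ ∀ i, r i x y := by
    intro x y
    constructor
    · intro hxy i
      have hp : x.1.1 i ≤ y.1.1 i := hxy.1 i
      have hc : ∀ j, x.2 j ≤ y.2 j := fun j => hxy.2 j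
      rcases lt_or_eq_of_le hp with h | h
      · exact Or.inl h
      · refine Or.inr ⟨h, ?_⟩
        by_cases h2 : (i : ℕ) / 2 < n
        · rcases lt_or_eq_of_le (hc ⟨(i : ℕ) / 2, h2⟩) with h3 | h3
          · exact Or.inl ⟨h2, h3⟩
          · exact Or.inr ⟨fun _ => h3, toLinearExtension.monotone hxy⟩
        · exact Or.inr ⟨fun hh => absurd hh h2, toLinearExtension.monotone hxy⟩
    · intro h
      have hp : ∀ i, x.1.1 i ≤ y.1.1 i := by
        intro i
        rcases h i with h' | ⟨h', _⟩
        · exact le_of_lt h'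
        · exact le_of_eq h'
      have hc : ∀ k : Fin n, x.2 k ≤ y.2 k := by
        intro k
        have hk2 : 2 * (k : ℕ) + 1 < d := by omega
        set i0 : Fin d := ⟨2 * (k : ℕ), by omega⟩ with hi0
        set i1 : Fin d := ⟨2 * (k : ℕ) + 1, by omega⟩ with hi1
        -- one of the two coordinates has equal first keys
        have hone : x.1.1 i0 = y.1.1 i0 ∨ x.1.1 i1 = y.1.1 i1 := by
          by_contra hcon
          push_neg at hcon
          obtain ⟨h0, h1⟩ := hcon
          -- both coordinates strictly increase; count ones
          have hx0 : x.1.1 i0 = false ∧ y.1.1 i0 = true := by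
            rcases lt_or_eq_of_le (hp i0) with h' | h'
            · exact Bool.lt_iff.mp h'
            · exact absurd h' h0
          have hx1 : x.1.1 i1 = false ∧ y.1.1 i1 = true := by
            rcases lt_or_eq_of_le (hp i1) with h' | h'
            · exact Bool.lt_iff.mp h'
            · exact absurd h' h1
          set s := Finset.univ.filter (fun i => x.1.1 i = true) with hs
          set t := Finset.univ.filter (fun i => y.1.1 i = true) with ht
          have hsub : insert i0 (insert i1 s) ⊆ t := by
            intro i hi
            simp only [Finset.mem_insert, hs, Finset.mem_filter, Finset.mem_univ,
              true_and] at hi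
            simp only [ht, Finset.mem_filter, Finset.mem_univ, true_and]
            rcases hi with rfl | rfl | hi
            · exact hx0.2
            · exact hx1.2
            · have := hp i
              rw [hi] at this
              exact le_antisymm (by simp) this
          have hne : i0 ≠ i1 := by
            intro hh
            have := congrArg Fin.val hh
            simp [hi0, hi1] at this
          have hn0 : i0 ∉ insert i1 s := by
            simp only [Finset.mem_insert, hs, Finset.mem_filter, Finset.mem_univ, true_and]
            push_neg
            exact ⟨hne, by simp [hx0.1]⟩
          have hn1 : i1 ∉ s := by
            simp only [hs, Finset.mem_filter, Finset.mem_univ, true_and]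
            simp [hx1.1]
          have hcard : s.card + 2 ≤ t.card := by
            have h1 : (insert i0 (insert i1 s)).card = s.card + 2 := by
              rw [Finset.card_insert_of_notMem hn0, Finset.card_insert_of_notMem hn1]
            calc s.card + 2 = (insert i0 (insert i1 s)).card := h1.symm
              _ ≤ t.card := Finset.card_le_card hsub
          have hxc : onesCount x.1.1 = a ∨ onesCount x.1.1 = a + 1 := x.1.2
          have hyc : onesCount y.1.1 = a ∨ onesCount y.1.1 = a + 1 := y.1.2
          unfold onesCount at hxc hyc
          rw [← hs] at hxc
          rw [← ht] at hyc
          omega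
        have hgood : ∀ i : Fin d, (i : ℕ) / 2 = (k : ℕ) → x.1.1 i = y.1.1 i →
            x.2 k ≤ y.2 k := by
          intro i hdiv heq
          have h2 : (i : ℕ) / 2 < n := by omega
          have hkk : (⟨(i : ℕ) / 2, h2⟩ : Fin n) = k := Fin.ext hdiv
          rcases h i with h' | ⟨_, (⟨_, hlt⟩ | ⟨heq2, _⟩)⟩
          · exact absurd h' (by simp [heq])
          · rw [hkk] at hlt
            exact le_of_lt hlt
          · have := heq2 h2
            rw [hkk] at this
            exact le_of_eq this
        rcases hone with h' | h'
        · exact hgood i0 (by simp [hi0]) h'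
        · exact hgood i1 (by simp [hi1]; omega) h'
      refine ⟨?_, hc⟩
      exact fun i => hp i
  have hmem : (d : Cardinal) ∈ {κ : Cardinal | ∃ (ι : Type) (r : ι → α → α → Prop),
      (∀ i, IsLinearOrder α (r i)) ∧ (∀ x y : α, x ≤ y ↔ ∀ i, r i x y) ∧
      Cardinal.mk ι = κ} :=
    ⟨Fin d, r, hlin, hiff, Cardinal.mk_fin d⟩
  exact csInf_le' hmem
end

section
/- Let d be a positive integer, let P_d^{[2,d−2]} = { p ∈ 2^d : 2 ≤ card{ i : p_i = 1 } ≤ d−2 }, and let P = P_d^{[2,d−2]} \ {(0,…,0,1,1), (1,…,1,0,0)} (removing the d-tuple whose first d−2 coordinates are 0 and last 2 coordinates are 1, and the d-tuple whose first d−2 coordinates are 1 and last 2 coordinates are 0). Then dim(P) ≤ d−2. Hence the same bound holds for any subposet of P; in particular, dim(P_d^{a,b}) ≤ d−2 whenever 3 ≤ a < b ≤ d−3. -/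
universe u

/-- `P_d^{[2,d-2]}`: the elements of the `d`-cube with between `2` and `d-2` coordinates
equal to `1`. -/
def cubeBand (d : ℕ) : Set (Fin d → Bool) :=
  {p | 2 ≤ onesCount p ∧ onesCount p ≤ d - 2}

/-- `P_d^{[2,d-2]}` minus the two elements `(0,…,0,1,1)` and `(1,…,1,0,0)`. -/
def cubeBandMinus (d : ℕ) : Set (Fin d → Bool) :=
  cubeBand d \ {fun i : Fin d => decide (d - 2 ≤ (i : ℕ)), fun i : Fin d => decide ((i : ℕ) < d - 2)}

lemma orderDim_le_of_embed {α : Type} [PartialOrder α] {n : ℕ} (f : α → Fin n → ℕ)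
    (hf : ∀ x y : α, x ≤ y ↔ ∀ i, f x i ≤ f y i) : orderDim α ≤ (n : Cardinal) := by
  have hinj : Function.Injective (toLinearExtension (α := α)) := fun a b h => h
  refine csInf_le' ?_
  refine ⟨Fin n, fun i x y => f x i < f y i ∨ (f x i = f y i ∧
    toLinearExtension x ≤ toLinearExtension y), fun i => ?_, fun x y => ?_, Cardinal.mk_fin n⟩
  · refine { refl := fun x => Or.inr ⟨rfl, le_refl _⟩, trans := ?_, antisymm := ?_, total := ?_ }
    · rintro a b c (h1 | ⟨h1, h1'⟩) (h2 | ⟨h2, h2'⟩)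
      · exact Or.inl (h1.trans h2)
      · exact Or.inl (h2 ▸ h1)
      · exact Or.inl (h1 ▸ h2)
      · exact Or.inr ⟨h1.trans h2, h1'.trans h2'⟩
    · rintro a b (h1 | ⟨h1, h1'⟩) (h2 | ⟨h2, h2'⟩)
      · exact absurd h2 (lt_asymm h1)
      · exact absurd h1 (h2 ▸ lt_irrefl _)
      · exact absurd h2 (h1 ▸ lt_irrefl _)
      · exact hinj (le_antisymm h1' h2')
    · intro a b
      rcases lt_trichotomy (f a i) (f b i) with h | h | h
      · exact Or.inl (Or.inl h)
      · rcases le_total (toLinearExtension a) (toLinearExtension b) with h' | h'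
        · exact Or.inl (Or.inr ⟨h, h'⟩)
        · exact Or.inr (Or.inr ⟨h.symm, h'⟩)
      · exact Or.inr (Or.inl h)
  · constructor
    · intro hxy i
      rcases lt_or_eq_of_le ((hf x y).mp hxy i) with h | h
      · exact Or.inl h
      · exact Or.inr ⟨h, toLinearExtension.monotone hxy⟩
    · intro h
      refine (hf x y).mpr fun i => ?_
      rcases h i with h' | ⟨h', _⟩
      · exact h'.le
      · exact h'.le


/-- auxiliary weight table -/
def htab (px py m : Bool) : ℕ :=
  match px, py, m with
  | false, false, _ => 0
  | true, false, false => 1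
  | true, false, true => 3
  | false, true, _ => 2
  | true, true, false => 3
  | true, true, true => 4

def gval (b px py : Bool) : ℕ := 5 * (cond b 1 0) + htab px py b

lemma gval_mono : ∀ b b' px px' py py' : Bool, b ≤ b' → px ≤ px' → py ≤ py' →
    gval b px py ≤ gval b' px' py' := by decide

lemma gval_tf : ∀ px py qx qy : Bool, ¬ (gval true px py ≤ gval false qx qy) := by decide

lemma gval_tt : ∀ px py qx qy : Bool, gval true px py ≤ gval true qx qy →
    htab px py true ≤ htab qx qy true := by decide

lemma pair7 : ∀ px py qx qy : Bool, htab px py true ≤ htab qx qy true →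
    ((px = true ∧ qx = false) ∨ (py = true ∧ qy = false)) →
    px = false ∧ py = true ∧ qx = true ∧ qy = false := by decide

lemma pair7fin : ∀ m : Bool, ¬ (gval m false true ≤ gval false true false) := by decide

lemma key (d : ℕ) (Q : Set (Fin d → Bool)) (hQ : Q ⊆ cubeBandMinus d) :
    orderDim ↥Q ≤ ((d - 2 : ℕ) : Cardinal) := by
  rcases le_or_gt d 3 with hd | hd
  · have hQe : ∀ x : ↥Q, False := by
      rintro ⟨p, hp⟩
      have h1 := (hQ hp).1
      have := h1.1
      have := h1.2
      omega
    have h0 : orderDim ↥Q ≤ ((0 : ℕ) : Cardinal) :=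
      orderDim_le_of_embed (fun _ i => i.elim0) (fun x _ => (hQe x).elim)
    exact h0.trans (by exact_mod_cast Nat.zero_le _)
  · set n := d - 2 with hn
    have hXd : d - 2 < d := by omega
    have hYd : d - 1 < d := by omega
    set X : Fin d := ⟨d - 2, hXd⟩ with hX
    set Y : Fin d := ⟨d - 1, hYd⟩ with hY
    have hXv : (X : ℕ) = d - 2 := rfl
    have hYv : (Y : ℕ) = d - 1 := rfl
    have hXY : X ≠ Y := by
      intro h
      rw [Fin.ext_iff, hXv, hYv] at h
      omega
    set emb : Fin n → Fin d := fun k => ⟨k.1, by omega⟩ with hemb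
    refine orderDim_le_of_embed
      (fun x k => gval (x.1 (emb k)) (x.1 X) (x.1 Y)) fun x y => ?_
    constructor
    · intro hxy k
      exact gval_mono _ _ _ _ _ _ (hxy (emb k)) (hxy X) (hxy Y)
    · rintro hg
      obtain ⟨p, hp⟩ := x
      obtain ⟨q, hq⟩ := y
      dsimp only at hg
      have hp' := hQ hp
      have hq' := hQ hq
      rw [Subtype.mk_le_mk]
      intro i
      by_contra hcon
      have hpq : p i = true ∧ q i = false := by
        revert hcon
        cases hpi : p i <;> cases hqi : q i <;> simp
      obtain ⟨hpi, hqi⟩ := hpq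
      rcases lt_or_ge i.1 (d - 2) with hi | hi
      · -- first-block violation
        have hk := hg ⟨i.1, by omega⟩
        simp only [hemb, Fin.eta] at hk
        rw [hpi, hqi] at hk
        exact gval_tf _ _ _ _ hk
      · -- i = X or i = Y
        have hiXY : i = X ∨ i = Y := by
          have hi2 := i.2
          rcases Nat.lt_or_ge i.1 (d - 1) with h | h
          · exact Or.inl (by rw [Fin.ext_iff, hXv]; omega)
          · exact Or.inr (by rw [Fin.ext_iff, hYv]; omega)
        have hk0 : ∃ k : Fin n, p (emb k) = true := by
          by_contra hall
          push_neg at hall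
          have hall' : ∀ j : Fin d, j.1 < d - 2 → p j = false := by
            intro j hj
            have := Bool.eq_false_iff.mpr (hall ⟨j.1, by omega⟩)
            simpa only [hemb, Fin.eta] using this
          have hsub : (Finset.univ.filter fun j => p j = true) ⊆ {X, Y} := by
            intro j hj
            simp only [Finset.mem_filter] at hj
            simp only [Finset.mem_insert, Finset.mem_singleton]
            by_contra hjXY
            push_neg at hjXY
            have hj2 : j.1 < d - 2 := by
              have hj3 := j.2
              have h1 : j.1 ≠ d - 2 := fun h => hjXY.1 (Fin.ext (h.trans hXv.symm))
              have h2 : j.1 ≠ d - 1 := fun h => hjXY.2 (Fin.ext (h.trans hYv.symm))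
              omega
            rw [hall' j hj2] at hj
            exact absurd hj.2 (by simp)
          have hcard2 : ({X, Y} : Finset (Fin d)).card = 2 := by
            rw [Finset.card_insert_of_notMem (by simp [hXY]), Finset.card_singleton]
          have hcardge : 2 ≤ (Finset.univ.filter fun j => p j = true).card := hp'.1.1
          have heq : (Finset.univ.filter fun j => p j = true) = {X, Y} :=
            Finset.eq_of_subset_of_card_le hsub (by omega)
          have hpT : p = fun j : Fin d => decide (d - 2 ≤ (j : ℕ)) := by
            funext j
            rcases lt_or_ge j.1 (d - 2) with hj | hj
            · rw [hall' j hj]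
              symm
              simp only [decide_eq_false_iff_not]
              omega
            · have hjm : j ∈ ({X, Y} : Finset (Fin d)) := by
                simp only [Finset.mem_insert, Finset.mem_singleton]
                have hj3 := j.2
                rcases Nat.lt_or_ge j.1 (d - 1) with h | h
                · exact Or.inl (by rw [Fin.ext_iff, hXv]; omega)
                · exact Or.inr (by rw [Fin.ext_iff, hYv]; omega)
              rw [← heq, Finset.mem_filter] at hjm
              rw [hjm.2]
              symm
              simp only [decide_eq_true_eq]
              omega
          exact hp'.2 (Or.inl hpT)
        obtain ⟨k0, hk0⟩ := hk0
        have hgk0 := hg k0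
        rw [hk0] at hgk0
        have hqk0 : q (emb k0) = true := by
          cases hq0 : q (emb k0)
          · rw [hq0] at hgk0
            exact absurd hgk0 (gval_tf _ _ _ _)
          · rfl
        rw [hqk0] at hgk0
        have hht := gval_tt _ _ _ _ hgk0
        have h7 : p X = false ∧ p Y = true ∧ q X = true ∧ q Y = false := by
          refine pair7 _ _ _ _ hht ?_
          rcases hiXY with h | h
          · exact Or.inl ⟨h ▸ hpi, h ▸ hqi⟩
          · exact Or.inr ⟨h ▸ hpi, h ▸ hqi⟩
        have hk1 : ∃ k : Fin n, q (emb k) = false := by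
          by_contra hall
          push_neg at hall
          have hall' : ∀ j : Fin d, j.1 < d - 2 → q j = true := by
            intro j hj
            have := Bool.not_eq_false (q (emb ⟨j.1, by omega⟩)) |>.mp (hall ⟨j.1, by omega⟩)
            simpa only [hemb, Fin.eta] using this
          have hsub : Finset.univ.erase Y ⊆ (Finset.univ.filter fun j => q j = true) := by
            intro j hj
            rw [Finset.mem_erase] at hj
            simp only [Finset.mem_filter, Finset.mem_univ, true_and]
            rcases lt_or_ge j.1 (d - 2) with h | h
            · exact hall' j h
            · have hjX : j = X := by
                have hj3 := j.2
                have h2 : j.1 ≠ d - 1 := by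
                  intro hh
                  exact hj.1 (Fin.ext (hh.trans hYv.symm))
                rw [Fin.ext_iff, hXv]
                omega
              rw [hjX]
              exact h7.2.2.1
          have hc1 : (Finset.univ.erase Y).card = d - 1 := by
            rw [Finset.card_erase_of_mem (Finset.mem_univ _)]
            simp
          have hle := Finset.card_le_card hsub
          have hcnt := hq'.1.2
          unfold onesCount at hcnt
          omega
        obtain ⟨k1, hk1⟩ := hk1
        have hgk1 := hg k1
        rw [hk1, h7.1, h7.2.1, h7.2.2.1, h7.2.2.2] at hgk1
        exact pair7fin _ hgk1

lemma card_ge (d : ℕ) (hd : 2 ≤ d) :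
    (Finset.univ.filter fun i : Fin d => decide (d - 2 ≤ (i : ℕ)) = true).card = 2 := by
  have hXd : d - 2 < d := by omega
  have hYd : d - 1 < d := by omega
  have heq : (Finset.univ.filter fun i : Fin d => decide (d - 2 ≤ (i : ℕ)) = true) =
      {⟨d - 2, hXd⟩, ⟨d - 1, hYd⟩} := by
    ext j
    simp only [Finset.mem_filter, Finset.mem_univ, true_and, decide_eq_true_eq,
      Finset.mem_insert, Finset.mem_singleton, Fin.ext_iff]
    have := j.2
    constructor
    · intro h
      omega
    · intro h
      rcases h with h | h <;> omega
  rw [heq, Finset.card_insert_of_notMem (by simp; omega), Finset.card_singleton]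

lemma card_lt (d : ℕ) (hd : 2 ≤ d) :
    (Finset.univ.filter fun i : Fin d => decide ((i : ℕ) < d - 2) = true).card = d - 2 := by
  have h := Finset.card_filter_add_card_filter_not
    (s := (Finset.univ : Finset (Fin d))) (p := fun i : Fin d => decide ((i : ℕ) < d - 2) = true)
  have h2 : (Finset.univ.filter fun i : Fin d => ¬ (decide ((i : ℕ) < d - 2) = true)).card = 2 := by
    have hfe : (Finset.univ.filter fun i : Fin d => ¬ (decide ((i : ℕ) < d - 2) = true)) =
        (Finset.univ.filter fun i : Fin d => decide (d - 2 ≤ (i : ℕ)) = true) := by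
      apply Finset.filter_congr
      intro i _
      simp only [decide_eq_true_eq]
      omega
    rw [hfe, card_ge d hd]
  simp only [Finset.card_univ, Fintype.card_fin] at h
  omega

lemma levels_subset (d a b : ℕ) (ha : 3 ≤ a) (hab : a < b) (hb : b ≤ d - 3) :
    cubeLevels d a b ⊆ cubeBandMinus d := by
  have hd : 7 ≤ d := by omega
  intro p hp
  have hcnt : onesCount p = a ∨ onesCount p = b := hp
  constructor
  · constructor
    · rcases hcnt with h | h <;> omega
    · rcases hcnt with h | h <;> omega
  · intro hmem
    rcases hmem with h | h
    · have : onesCount p = 2 := by rw [h]; exact card_ge d (by omega)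
      omega
    · have : onesCount p = d - 2 := by rw [h]; exact card_lt d (by omega)
      omega

theorem stmt6 (d : ℕ) (hd : 0 < d) :
    orderDim ↥(cubeBandMinus d) ≤ (d - 2 : ℕ) ∧
    (∀ Q : Set (Fin d → Bool), Q.Nonempty → Q ⊆ cubeBandMinus d →
      orderDim ↥Q ≤ (d - 2 : ℕ)) ∧
    (∀ a b : ℕ, 3 ≤ a → a < b → b ≤ d - 3 →
      orderDim ↥(cubeLevels d a b) ≤ (d - 2 : ℕ)) := by
  refine ⟨key d _ subset_rfl, fun Q _ hQ => key d Q hQ,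
    fun a b ha hab hb => key d _ (levels_subset d a b ha hab hb)⟩
end

section
/- Let P and Q be finite-dimensional posets, each having a least element and a greatest element. Then dim(P × Q) = dim(P) + dim(Q). -/
universe u

open Cardinal

section aux

variable {α : Type u} [PartialOrder α]

/-- Szpilrajn extension reversing a given non-related pair. -/
lemma exists_linext_rev {x y : α} (h : ¬ x ≤ y) :
    ∃ s : α → α → Prop, IsLinearOrder α s ∧ (∀ a b : α, a ≤ b → s a b) ∧ ¬ s x y := by
  set r : α → α → Prop := fun a b => a ≤ b ∨ (a ≤ y ∧ x ≤ b) with hr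
  haveI : IsPartialOrder α r := by
    refine { refl := fun a => Or.inl le_rfl, trans := ?_, antisymm := ?_ }
    · rintro a b c (hab | ⟨hay, hxb⟩) (hbc | ⟨hby, hxc⟩)
      · exact Or.inl (hab.trans hbc)
      · exact Or.inr ⟨hab.trans hby, hxc⟩
      · exact Or.inr ⟨hay, hxb.trans hbc⟩
      · exact absurd (hxb.trans hby) h
    · rintro a b (hab | ⟨hay, hxb⟩) (hba | ⟨hby, hxa⟩)
      · exact le_antisymm hab hba
      · exact absurd ((hxa.trans hab).trans hby) h
      · exact absurd ((hxb.trans hba).trans hay) h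
      · exact absurd (hxa.trans hay) h
  obtain ⟨s, hslin, hrs⟩ := extend_partialOrder r
  refine ⟨s, hslin, fun a b hab => hrs a b (Or.inl hab), fun hsxy => ?_⟩
  have hsyx : s y x := hrs y x (Or.inr ⟨le_rfl, le_rfl⟩)
  haveI := hslin
  exact h (antisymm_of s hsxy hsyx ▸ le_rfl)

lemma orderDim_set_nonempty :
    {κ : Cardinal.{u} | ∃ (ι : Type u) (r : ι → α → α → Prop),
      (∀ i, IsLinearOrder α (r i)) ∧
      (∀ x y : α, x ≤ y ↔ ∀ i, r i x y) ∧
      Cardinal.mk ι = κ}.Nonempty := by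
  classical
  set ι : Type u := {p : α × α // ¬ p.1 ≤ p.2} with hι
  have hch : ∀ i : ι, ∃ s : α → α → Prop,
      IsLinearOrder α s ∧ (∀ a b : α, a ≤ b → s a b) ∧ ¬ s i.1.1 i.1.2 :=
    fun i => exists_linext_rev i.2
  choose s hslin hsext hsrev using hch
  refine ⟨Cardinal.mk ι, ι, s, hslin, fun x y => ⟨fun hxy i => hsext i x y hxy, ?_⟩, rfl⟩
  intro hall
  by_contra hxy
  exact hsrev ⟨(x, y), hxy⟩ (hall ⟨(x, y), hxy⟩)

lemma orderDim_spec (α : Type u) [PartialOrder α] :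
    ∃ (ι : Type u) (r : ι → α → α → Prop),
      (∀ i, IsLinearOrder α (r i)) ∧
      (∀ x y : α, x ≤ y ↔ ∀ i, r i x y) ∧
      Cardinal.mk ι = orderDim α :=
  csInf_mem orderDim_set_nonempty

lemma orderDim_le_mk_s7 {ι : Type u} (r : ι → α → α → Prop)
    (hlin : ∀ i, IsLinearOrder α (r i))
    (hreal : ∀ x y : α, x ≤ y ↔ ∀ i, r i x y) :
    orderDim α ≤ Cardinal.mk ι :=
  csInf_le' ⟨ι, r, hlin, hreal, rfl⟩

end aux

theorem stmt7 (P Q : Type u) [PartialOrder P] [Nonempty P] [BoundedOrder P]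
    [PartialOrder Q] [Nonempty Q] [BoundedOrder Q]
    (hP : orderDim P < Cardinal.aleph0) (hQ : orderDim Q < Cardinal.aleph0) :
    orderDim (P × Q) = orderDim P + orderDim Q := by
  classical
  apply le_antisymm
  -- Upper bound: dim (P × Q) ≤ dim P + dim Q
  · obtain ⟨ιP, rP, hPlin, hPreal, hPmk⟩ := orderDim_spec P
    obtain ⟨ιQ, rQ, hQlin, hQreal, hQmk⟩ := orderDim_spec Q
    obtain ⟨sP, hsPlin, hsPext⟩ := extend_partialOrder ((· ≤ ·) : P → P → Prop)
    obtain ⟨sQ, hsQlin, hsQext⟩ := extend_partialOrder ((· ≤ ·) : Q → Q → Prop)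
    set t : ιP ⊕ ιQ → (P × Q) → (P × Q) → Prop := fun j a b =>
      Sum.elim (fun i => rP i a.1 b.1 ∧ (a.1 = b.1 → sQ a.2 b.2))
               (fun i => rQ i a.2 b.2 ∧ (a.2 = b.2 → sP a.1 b.1)) j with ht
    have htlin : ∀ j, IsLinearOrder (P × Q) (t j) := by
      rintro (i | i)
      · haveI := hPlin i
        haveI := hsQlin
        refine { refl := fun a => ⟨refl_of _ _, fun _ => refl_of _ _⟩,
                 trans := ?_, antisymm := ?_, total := ?_ }
        · rintro a b c ⟨h1, h1'⟩ ⟨h2, h2'⟩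
          refine ⟨trans_of _ h1 h2, fun hac => ?_⟩
          have hab : a.1 = b.1 := antisymm_of _ h1 (hac ▸ h2)
          exact trans_of _ (h1' hab) (h2' (hab ▸ hac))
        · rintro a b ⟨h1, h1'⟩ ⟨h2, h2'⟩
          have hab : a.1 = b.1 := antisymm_of _ h1 h2
          exact Prod.ext hab (antisymm_of _ (h1' hab) (h2' hab.symm))
        · intro a b
          rcases eq_or_ne a.1 b.1 with hab | hab
          · rcases total_of sQ a.2 b.2 with h | h
            · exact Or.inl ⟨hab ▸ refl_of _ _, fun _ => h⟩
            · exact Or.inr ⟨hab ▸ refl_of _ _, fun _ => h⟩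
          · rcases total_of (rP i) a.1 b.1 with h | h
            · exact Or.inl ⟨h, fun h' => absurd h' hab⟩
            · exact Or.inr ⟨h, fun h' => absurd h'.symm hab⟩
      · haveI := hQlin i
        haveI := hsPlin
        refine { refl := fun a => ⟨refl_of _ _, fun _ => refl_of _ _⟩,
                 trans := ?_, antisymm := ?_, total := ?_ }
        · rintro a b c ⟨h1, h1'⟩ ⟨h2, h2'⟩
          refine ⟨trans_of _ h1 h2, fun hac => ?_⟩
          have hab : a.2 = b.2 := antisymm_of _ h1 (hac ▸ h2)
          exact trans_of _ (h1' hab) (h2' (hab ▸ hac))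
        · rintro a b ⟨h1, h1'⟩ ⟨h2, h2'⟩
          have hab : a.2 = b.2 := antisymm_of _ h1 h2
          exact Prod.ext (antisymm_of _ (h1' hab) (h2' hab.symm)) hab
        · intro a b
          rcases eq_or_ne a.2 b.2 with hab | hab
          · rcases total_of sP a.1 b.1 with h | h
            · exact Or.inl ⟨hab ▸ refl_of _ _, fun _ => h⟩
            · exact Or.inr ⟨hab ▸ refl_of _ _, fun _ => h⟩
          · rcases total_of (rQ i) a.2 b.2 with h | h
            · exact Or.inl ⟨h, fun h' => absurd h' hab⟩
            · exact Or.inr ⟨h, fun h' => absurd h'.symm hab⟩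
    have htreal : ∀ x y : P × Q, x ≤ y ↔ ∀ j, t j x y := by
      intro x y
      rw [Prod.le_def]
      constructor
      · rintro ⟨h1, h2⟩ (i | i)
        · exact ⟨(hPreal x.1 y.1).mp h1 i, fun _ => hsQext x.2 y.2 h2⟩
        · exact ⟨(hQreal x.2 y.2).mp h2 i, fun _ => hsPext x.1 y.1 h1⟩
      · intro hall
        exact ⟨(hPreal x.1 y.1).mpr fun i => (hall (Sum.inl i)).1,
               (hQreal x.2 y.2).mpr fun i => (hall (Sum.inr i)).1⟩
    calc orderDim (P × Q) ≤ Cardinal.mk (ιP ⊕ ιQ) := orderDim_le_mk_s7 t htlin htreal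
      _ = orderDim P + orderDim Q := by rw [Cardinal.mk_sum, Cardinal.lift_id,
            Cardinal.lift_id, hPmk, hQmk]
  -- Lower bound: dim P + dim Q ≤ dim (P × Q)
  · obtain ⟨ι, L, hLlin, hLreal, hLmk⟩ := orderDim_spec (P × Q)
    haveI : ∀ i, IsLinearOrder (P × Q) (L i) := hLlin
    have hLext : ∀ (i) (x y : P × Q), x ≤ y → L i x y := fun i x y h => (hLreal x y).mp h i
    set φ : Set ι := {i | L i (⊥, ⊤) (⊤, ⊥)} with hφ
    -- realizer of P indexed by φ
    have hPle : orderDim P ≤ Cardinal.mk φ := by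
      refine orderDim_le_mk_s7 (fun i a b => L i.1 (a, ⊥) (b, ⊥)) ?_ ?_
      · intro i
        refine { refl := fun a => refl_of _ _, trans := fun a b c => trans_of _,
                 antisymm := ?_, total := fun a b => total_of _ _ _ }
        · intro a b h1 h2
          exact congrArg Prod.fst (antisymm_of (L i.1) h1 h2)
      · intro a b
        constructor
        · intro hab i
          exact hLext i.1 _ _ (Prod.mk_le_mk.mpr ⟨hab, le_rfl⟩)
        · intro hall
          by_contra hab
          have h1 : ¬ ((a, (⊥ : Q)) ≤ (b, (⊤ : Q))) := by
            rw [Prod.mk_le_mk]; tauto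
          obtain ⟨i, hi⟩ := not_forall.mp (h1 ∘ (hLreal _ _).mpr)
          have hi2 : L i (b, ⊤) (a, ⊥) := (total_of (L i) _ _).resolve_left hi
          have hiφ : i ∈ φ := by
            have t1 : L i ((⊥ : P), (⊤ : Q)) (b, ⊤) :=
              hLext i _ _ (Prod.mk_le_mk.mpr ⟨bot_le, le_rfl⟩)
            have t2 : L i (a, (⊥ : Q)) ((⊤ : P), ⊥) :=
              hLext i _ _ (Prod.mk_le_mk.mpr ⟨le_top, le_rfl⟩)
            exact trans_of (L i) (trans_of (L i) t1 hi2) t2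
          have t3 : L i (b, (⊥ : Q)) (b, (⊤ : Q)) :=
            hLext i _ _ (Prod.mk_le_mk.mpr ⟨le_rfl, bot_le⟩)
          exact hi (trans_of (L i) (hall ⟨i, hiφ⟩) t3)
    -- realizer of Q indexed by φᶜ
    have hQle : orderDim Q ≤ Cardinal.mk ↥(φᶜ) := by
      refine orderDim_le_mk_s7 (fun i a b => L i.1 (⊥, a) (⊥, b)) ?_ ?_
      · intro i
        refine { refl := fun a => refl_of _ _, trans := fun a b c => trans_of _,
                 antisymm := ?_, total := fun a b => total_of _ _ _ }
        · intro a b h1 h2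
          exact congrArg Prod.snd (antisymm_of (L i.1) h1 h2)
      · intro a b
        constructor
        · intro hab i
          exact hLext i.1 _ _ (Prod.mk_le_mk.mpr ⟨le_rfl, hab⟩)
        · intro hall
          by_contra hab
          have h1 : ¬ (((⊥ : P), a) ≤ ((⊤ : P), b)) := by
            rw [Prod.mk_le_mk]; tauto
          obtain ⟨i, hi⟩ := not_forall.mp (h1 ∘ (hLreal _ _).mpr)
          have hi2 : L i (⊤, b) (⊥, a) := (total_of (L i) _ _).resolve_left hi
          have hiφ : i ∈ φᶜ := by
            intro hmem
            have t1 : L i ((⊤ : P), (⊥ : Q)) (⊤, b) :=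
              hLext i _ _ (Prod.mk_le_mk.mpr ⟨le_rfl, bot_le⟩)
            have t2 : L i ((⊥ : P), a) (⊥, ⊤) :=
              hLext i _ _ (Prod.mk_le_mk.mpr ⟨le_rfl, le_top⟩)
            have hcyc : L i ((⊤ : P), (⊥ : Q)) (⊥, ⊤) :=
              trans_of (L i) (trans_of (L i) t1 hi2) t2
            have heq : ((⊥ : P), (⊤ : Q)) = ((⊤ : P), (⊥ : Q)) :=
              antisymm_of (L i) hmem hcyc
            have hQtriv : (⊤ : Q) = (⊥ : Q) := congrArg Prod.snd heq
            exact hab (le_trans (le_top (a := a)) (hQtriv ▸ bot_le))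
          have t3 : L i ((⊥ : P), b) ((⊤ : P), b) :=
            hLext i _ _ (Prod.mk_le_mk.mpr ⟨bot_le, le_rfl⟩)
          exact hi (trans_of (L i) (hall ⟨i, hiφ⟩) t3)
    calc orderDim P + orderDim Q ≤ Cardinal.mk φ + Cardinal.mk ↥(φᶜ) :=
          add_le_add hPle hQle
      _ = Cardinal.mk ι := Cardinal.mk_sum_compl φ
      _ = orderDim (P × Q) := hLmk
end

section
/- For every positive integer n, the d-cube 2^n (the n-fold direct product of the two-element chain 2 = {0 < 1}) has dimension exactly n. -/
universe u

/-!
A product of `#ι` chains is realized by the linear orders "compare coordinate `i` first, break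
ties by a fixed linear extension of the product", so its dimension is at most `#ι`. Conversely,
in `ι → Bool` the atoms `aᵢ` and coatoms `bᵢ` satisfy `aᵢ ≤ bⱼ ↔ i ≠ j`. In any realizer, each
pair `(aᵢ, bᵢ)` is reversed by some linear order, and no linear order reverses two pairs, since
`aᵢ ≤ bⱼ ≤ aⱼ ≤ bᵢ` in it would put `aᵢ` below `bᵢ`; so a realizer has at least `#ι` members.
-/

universe v

open Function Cardinal

def IsRealizer {α ι : Type*} [PartialOrder α] (r : ι → α → α → Prop) : Prop :=
  (∀ i, IsLinearOrder α (r i)) ∧ ∀ x y : α, x ≤ y ↔ ∀ i, r i x y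

theorem orderDim_le_lift_mk {α : Type max u v} {ι : Type v} [PartialOrder α]
    {r : ι → α → α → Prop} (hr : IsRealizer r) : orderDim α ≤ lift.{u} #ι :=
  csInf_le' ⟨ULift ι, fun k => r k.down, fun k => hr.1 k.down,
    fun x y => (hr.2 x y).trans ⟨fun h k => h k.down, fun h i => h ⟨i⟩⟩, mk_uLift ι⟩

theorem le_orderDim {α ι₀ : Type u} [PartialOrder α] {r₀ : ι₀ → α → α → Prop}
    (hr₀ : IsRealizer r₀) {κ : Cardinal.{u}}
    (hκ : ∀ (ι : Type u) (r : ι → α → α → Prop), IsRealizer r → κ ≤ #ι) : κ ≤ orderDim α :=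
  le_csInf ⟨#ι₀, ι₀, r₀, hr₀.1, hr₀.2, rfl⟩ fun _ ⟨ι, r, hlin, hiff, hκι⟩ =>
    hκι ▸ hκ ι r ⟨hlin, hiff⟩

section Pi

variable {ι : Type*} {α : ι → Type*} [∀ i, LinearOrder (α i)]

noncomputable def Pi.lexByCoord (i : ι) (x : ∀ i, α i) : α i ×ₗ LinearExtension (∀ i, α i) :=
  toLex (x i, toLinearExtension x)

theorem Pi.lexByCoord_injective (i : ι) : Injective (Pi.lexByCoord (α := α) i) :=
  fun _ _ h => congrArg (fun p => (ofLex p).2) h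

theorem Pi.isRealizer_lexByCoord :
    IsRealizer fun i : ι => ((· ≤ ·) on Pi.lexByCoord (α := α) i) := by
  refine ⟨fun i => (Pi.lexByCoord_injective i).isLinearOrder_onFun (· ≤ ·), fun x y => ⟨?_, ?_⟩⟩
  · exact fun hxy i => Prod.Lex.toLex_mono ⟨hxy i, toLinearExtension.monotone hxy⟩
  · exact fun h i => Prod.Lex.monotone_fst _ _ (h i)

end Pi

theorem orderDim_pi_le {ι : Type u} (α : ι → Type v) [∀ i, LinearOrder (α i)] :
    orderDim (∀ i, α i) ≤ lift.{v} #ι :=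
  orderDim_le_lift_mk Pi.isRealizer_lexByCoord

theorem IsRealizer.nonempty_embedding_of_le_iff_ne {α ι κ : Type*} [PartialOrder α]
    {r : κ → α → α → Prop} (hr : IsRealizer r) (a b : ι → α)
    (hab : ∀ i j, a i ≤ b j ↔ i ≠ j) : Nonempty (ι ↪ κ) := by
  have hrev : ∀ i, ∃ k, ¬ r k (a i) (b i) := fun i => by
    by_contra! h
    exact (hab i i).1 ((hr.2 _ _).2 h) rfl
  choose f hf using hrev
  refine ⟨⟨f, fun i j hij => by_contra fun hne => hf i ?_⟩⟩
  have := hr.1 (f i)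
  have hba : r (f i) (b j) (a j) := (total_of (r (f i)) _ _).resolve_left (hij ▸ hf j)
  have hai : r (f i) (a i) (b j) := (hr.2 _ _).1 ((hab i j).2 hne) (f i)
  have haj : r (f i) (a j) (b i) := (hr.2 _ _).1 ((hab j i).2 (Ne.symm hne)) (f i)
  exact trans_of _ hai (trans_of _ hba haj)

theorem le_orderDim_of_forall_le_iff_ne {α ι : Type u} [PartialOrder α] {ι₀ : Type u}
    {r₀ : ι₀ → α → α → Prop} (hr₀ : IsRealizer r₀) (a b : ι → α)
    (hab : ∀ i j, a i ≤ b j ↔ i ≠ j) : #ι ≤ orderDim α :=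
  le_orderDim hr₀ fun _ _ hr =>
    let ⟨e⟩ := hr.nonempty_embedding_of_le_iff_ne a b hab
    mk_le_of_injective e.injective

theorem orderDim_bool_cube (ι : Type u) : orderDim (ι → Bool) = #ι := by
  classical
  refine ((orderDim_pi_le fun _ => Bool).trans_eq (lift_uzero #ι)).antisymm
    (le_orderDim_of_forall_le_iff_ne Pi.isRealizer_lexByCoord
      (fun i j : ι => decide (j = i)) (fun i j => decide (j ≠ i)) fun i j => ?_)
  constructor
  · intro h hij
    simpa [hij, Bool.le_iff_imp] using h j
  · intro hij k
    by_cases hk : k = i <;> simp [hk, hij]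

theorem stmt9_general (n : ℕ) : orderDim (Fin n → Bool) = n := by
  rw [orderDim_bool_cube, mk_fin]

theorem stmt9 (n : ℕ) (hn : 0 < n) : orderDim (Fin n → Bool) = n :=
  stmt9_general n
end

section
/- For every finite-dimensional poset P, abs(P) ≤ dim(P). -/
/-!
The `n` elements `aⱼ = eⱼ` and `bⱼ = 1 - eⱼ` of `2ⁿ` form the standard example `Sₙ`: `aⱼ ≰ bⱼ`,
while `aⱼ ≤ bₖ` for `j ≠ k`. A linear order of a realizer can reverse at most one of the pairs
`(aⱼ, bⱼ)`, so every realizer of `P × 2ⁿ` has at least `n` members. If `P × 2ⁿ` has the same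
dimension as `P`, then `n ≤ dim P`; hence `abs P ≤ dim P`, trivially so when `dim P` is infinite.
-/

universe u

/-- The absorbency of a (finite-dimensional) poset `P`: the largest natural
number `n` such that taking the product of `P` with any `n`-tuple of (nonempty)
chains does not change the dimension. -/
noncomputable def absorb (P : Type u) [PartialOrder P] : ℕ :=
  sSup {n : ℕ | ∀ (T : Fin n → Type u) [∀ i, LinearOrder (T i)] [∀ i, Nonempty (T i)],
    orderDim (P × ∀ i, T i) = orderDim P}

/-- The bounded dimension of a (finite-dimensional) poset `P`: the greatest
natural number `n` such that some bounded subposet of `P` (equivalently, some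
nonempty interval `[p, p']`) has dimension `n`. -/
noncomputable def bdDim (P : Type u) [PartialOrder P] : ℕ :=
  sSup {n : ℕ | ∃ p p' : P, p ≤ p' ∧ orderDim ↥(Set.Icc p p') = n}

open Cardinal

section Realizer

variable {α : Type u} [PartialOrder α]

lemma exists_linearOrder_extension_not_rel {x y : α} (hxy : ¬ x ≤ y) :
    ∃ s : α → α → Prop, IsLinearOrder α s ∧ (∀ a b : α, a ≤ b → s a b) ∧ ¬ s x y := by
  -- the order generated by `≤` and `y ≤ x`
  let r : α → α → Prop := fun a b => a ≤ b ∨ (a ≤ y ∧ x ≤ b)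
  have : IsPartialOrder α r :=
    { refl := fun a => Or.inl le_rfl
      trans := by
        rintro a b c (hab | ⟨hay, hxb⟩) (hbc | ⟨hby, hxc⟩)
        · exact Or.inl (hab.trans hbc)
        · exact Or.inr ⟨hab.trans hby, hxc⟩
        · exact Or.inr ⟨hay, hxb.trans hbc⟩
        · exact absurd (hxb.trans hby) hxy
      antisymm := by
        rintro a b (hab | ⟨hay, hxb⟩) (hba | ⟨hby, hxa⟩)
        · exact le_antisymm hab hba
        · exact absurd ((hxa.trans hab).trans hby) hxy
        · exact absurd ((hxb.trans hba).trans hay) hxy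
        · exact absurd (hxb.trans hby) hxy }
  obtain ⟨s, hs, hrs⟩ := extend_partialOrder r
  refine ⟨s, hs, fun a b hab => hrs a b (Or.inl hab), fun hsxy => hxy ?_⟩
  have hsyx : s y x := hrs y x (Or.inr ⟨le_rfl, le_rfl⟩)
  exact (hs.antisymm x y hsxy hsyx).le

lemma exists_realizer (α : Type u) [PartialOrder α] :
    ∃ (ι : Type u) (r : ι → α → α → Prop),
      (∀ i, IsLinearOrder α (r i)) ∧ (∀ x y : α, x ≤ y ↔ ∀ i, r i x y) := by
  refine ⟨{s : α → α → Prop // IsLinearOrder α s ∧ ∀ a b : α, a ≤ b → s a b},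
    fun s => s.1, fun s => s.2.1, fun x y => ⟨fun h s => s.2.2 x y h, fun h => ?_⟩⟩
  by_contra hxy
  obtain ⟨s, hs, hext, hsxy⟩ := exists_linearOrder_extension_not_rel hxy
  exact hsxy (h ⟨s, hs, hext⟩)

lemma le_orderDim_s13 {κ : Cardinal.{u}}
    (h : ∀ (ι : Type u) (r : ι → α → α → Prop), (∀ i, IsLinearOrder α (r i)) →
      (∀ x y : α, x ≤ y ↔ ∀ i, r i x y) → κ ≤ #ι) :
    κ ≤ orderDim α := by
  obtain ⟨ι, r, hlin, hreal⟩ := exists_realizer α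
  refine le_csInf ⟨#ι, ι, r, hlin, hreal, rfl⟩ ?_
  rintro _ ⟨ι', r', hlin', hreal', rfl⟩
  exact h ι' r' hlin' hreal'

lemma mk_le_orderDim_of_standardExample {J : Type u} (a b : J → α)
    (hnot : ∀ j, ¬ a j ≤ b j) (hle : ∀ j k, j ≠ k → a j ≤ b k) :
    #J ≤ orderDim α := by
  refine le_orderDim_s13 fun ι r hlin hreal => ?_
  have hrev : ∀ j, ∃ i, ¬ r i (a j) (b j) := by
    intro j
    by_contra! h
    exact hnot j ((hreal _ _).2 h)
  choose f hf using hrev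
  refine mk_le_of_injective (f := f) fun j k hjk => ?_
  by_contra hne
  -- in the linear order `r (f j)` both pairs are reversed: `a j ≤ b k < a k ≤ b j`
  have hba : r (f j) (b k) (a k) :=
    ((hlin _).total (a k) (b k)).resolve_left (hjk ▸ hf k)
  have hajbk := (hreal _ _).1 (hle j k hne) (f j)
  have hakbj := (hreal _ _).1 (hle k j (Ne.symm hne)) (f j)
  exact hf j ((hlin _).trans _ _ _ ((hlin _).trans _ _ _ hajbk hba) hakbj)

end Realizer

lemma natCast_le_orderDim_prod_pi_bool (P : Type u) [PartialOrder P] [Nonempty P] (n : ℕ) :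
    (n : Cardinal) ≤ orderDim (P × (Fin n → ULift.{u} Bool)) := by
  obtain ⟨p⟩ := ‹Nonempty P›
  let a : ULift.{u} (Fin n) → P × (Fin n → ULift.{u} Bool) :=
    fun j => (p, fun i => ⟨decide (i = j.down)⟩)
  let b : ULift.{u} (Fin n) → P × (Fin n → ULift.{u} Bool) :=
    fun j => (p, fun i => ⟨decide (i ≠ j.down)⟩)
  have hnot : ∀ j, ¬ a j ≤ b j := fun j h => by
    simpa [a, b, ULift.up_le, Bool.le_iff_imp] using h.2 j.down
  have hle : ∀ j k, j ≠ k → a j ≤ b k := fun j k hne => by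
    refine ⟨le_rfl, fun i => ?_⟩
    have : j.down ≠ k.down := fun h => hne (ULift.ext _ _ h)
    by_cases hij : i = j.down <;> simp_all [a, b, ULift.up_le]
  simpa using mk_le_orderDim_of_standardExample a b hnot hle

lemma natCast_sSup_le {s : Set ℕ} {κ : Cardinal} (h : ∀ n ∈ s, (n : Cardinal) ≤ κ) :
    ((sSup s : ℕ) : Cardinal) ≤ κ := by
  rcases lt_or_ge κ ℵ₀ with hκ | hκ
  · obtain ⟨d, rfl⟩ := lt_aleph0.mp hκ
    exact Nat.cast_le.mpr (csSup_le' fun n hn => Nat.cast_le.mp (h n hn))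
  · exact natCast_lt_aleph0.le.trans hκ

theorem stmt13_general (P : Type u) [PartialOrder P] [Nonempty P] :
    (absorb P : Cardinal) ≤ orderDim P :=
  natCast_sSup_le fun n hn =>
    hn (fun _ => ULift.{u} Bool) ▸ natCast_le_orderDim_prod_pi_bool P n

theorem stmt13 (P : Type u) [PartialOrder P] [Nonempty P]
    (hfd : orderDim P < Cardinal.aleph0) :
    (absorb P : Cardinal) ≤ orderDim P :=
  stmt13_general P
end

section
/- For finite-dimensional posets P and Q, bd-dim(P × Q) = bd-dim(P) + bd-dim(Q). -/
universe u

/-! The product of two bounded posets has dimension exactly the sum of their dimensions. Gluing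
lexicographic refinements of realizers of the factors gives `≤`. For `≥`, take a realizer `L` of
`α × β`: every `a ≰ a'` is witnessed by a linear order `L k` that puts `(a', ⊤)` below `(a, ⊥)`, and
every `b ≰ b'` by one that puts `(⊤, b')` below `(⊥, b)`, and no `L k` can do both. Since an
interval of a product is the product of the intervals, maximal bounded dimensions add up. -/

open Cardinal Set

section Realizer

variable {α β : Type u} [PartialOrder α] [PartialOrder β]

structure IsRealizer_s16 {ι : Type*} (r : ι → α → α → Prop) : Prop where
  isLinearOrder : ∀ i, IsLinearOrder α (r i)
  le_iff : ∀ x y : α, x ≤ y ↔ ∀ i, r i x y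

lemma IsRealizer_s16.rel_of_le {ι : Type*} {r : ι → α → α → Prop} (hr : IsRealizer_s16 r) {x y : α}
    (h : x ≤ y) (i : ι) : r i x y :=
  (hr.le_iff x y).1 h i

lemma orderDim_le_mk_s16 {ι : Type u} {r : ι → α → α → Prop} (hr : IsRealizer_s16 r) :
    orderDim α ≤ #ι :=
  csInf_le' ⟨ι, r, hr.isLinearOrder, hr.le_iff, rfl⟩

lemma exists_linearExtension_not_rel {x y : α} (h : ¬x ≤ y) :
    ∃ s : α → α → Prop, IsLinearOrder α s ∧ (· ≤ ·) ≤ s ∧ ¬s x y := by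
  -- `≤` together with `y ≤ x`, closed under transitivity
  let t : α → α → Prop := fun a b => a ≤ b ∨ (a ≤ y ∧ x ≤ b)
  have : IsPartialOrder α t :=
    { refl := fun a => Or.inl le_rfl
      trans := by
        rintro a b c (hab | ⟨hay, hxb⟩) (hbc | ⟨hby, hxc⟩)
        · exact Or.inl (hab.trans hbc)
        · exact Or.inr ⟨hab.trans hby, hxc⟩
        · exact Or.inr ⟨hay, hxb.trans hbc⟩
        · exact absurd (hxb.trans hby) h
      antisymm := by
        rintro a b (hab | ⟨hay, hxb⟩) (hba | ⟨hby, hxa⟩)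
        · exact le_antisymm hab hba
        · exact absurd ((hxa.trans hab).trans hby) h
        · exact absurd ((hxb.trans hba).trans hay) h
        · exact absurd (hxb.trans hby) h }
  obtain ⟨s, hs, hts⟩ := extend_partialOrder t
  refine ⟨s, hs, fun a b hab => hts _ _ (Or.inl hab), fun hxy => h ?_⟩
  exact (antisymm hxy (hts _ _ (Or.inr ⟨le_rfl, le_rfl⟩)) : x = y).le

lemma isRealizer_linearExtensions :
    IsRealizer_s16 (α := α) fun s : {s : α → α → Prop // IsLinearOrder α s ∧ (· ≤ ·) ≤ s} => s.1 where
  isLinearOrder s := s.2.1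
  le_iff x y := by
    refine ⟨fun h s => s.2.2 x y h, fun h => by_contra fun hxy => ?_⟩
    obtain ⟨s, hs, hle, hsxy⟩ := exists_linearExtension_not_rel hxy
    exact hsxy (h ⟨s, hs, hle⟩)

lemma exists_isRealizer_mk_eq_orderDim (α : Type u) [PartialOrder α] :
    ∃ (ι : Type u) (r : ι → α → α → Prop), IsRealizer_s16 r ∧ #ι = orderDim α := by
  obtain ⟨ι, r, hlin, hiff, hι⟩ :=
    csInf_mem (s := {κ : Cardinal.{u} | ∃ (ι : Type u) (r : ι → α → α → Prop),
      (∀ i, IsLinearOrder α (r i)) ∧ (∀ x y : α, x ≤ y ↔ ∀ i, r i x y) ∧ #ι = κ})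
      ⟨_, _, _, isRealizer_linearExtensions.isLinearOrder, isRealizer_linearExtensions.le_iff, rfl⟩
  exact ⟨ι, r, ⟨hlin, hiff⟩, hι⟩

lemma IsRealizer_s16.comap {ι : Type*} {r : ι → β → β → Prop} (hr : IsRealizer_s16 r) (f : α ↪o β) :
    IsRealizer_s16 fun i => Function.onFun (r i) f where
  isLinearOrder i := have := hr.isLinearOrder i; f.injective.isLinearOrder_onFun (r i)
  le_iff x y := by rw [← f.le_iff_le, hr.le_iff]

lemma orderDim_le_of_orderEmbedding (f : α ↪o β) : orderDim α ≤ orderDim β := by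
  obtain ⟨ι, r, hr, hι⟩ := exists_isRealizer_mk_eq_orderDim β
  exact hι ▸ orderDim_le_mk_s16 (hr.comap f)

lemma OrderIso.orderDim_eq (e : α ≃o β) : orderDim α = orderDim β :=
  (orderDim_le_of_orderEmbedding e.toOrderEmbedding).antisymm
    (orderDim_le_of_orderEmbedding e.symm.toOrderEmbedding)

end Realizer

section Product

variable {α β : Type u} [PartialOrder α] [PartialOrder β]

lemma isLinearOrder_lex {γ δ : Type*} (r : γ → γ → Prop) (s : δ → δ → Prop)
    [IsLinearOrder γ r] [IsLinearOrder δ s] :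
    IsLinearOrder (γ × δ) fun x y => r x.1 y.1 ∧ (x.1 = y.1 → s x.2 y.2) where
  refl x := ⟨refl_of r _, fun _ => refl_of s _⟩
  trans x y z hxy hyz := by
    refine ⟨trans_of r hxy.1 hyz.1, fun hxz => ?_⟩
    have hxy₁ : x.1 = y.1 := antisymm hxy.1 (hxz ▸ hyz.1)
    exact trans_of s (hxy.2 hxy₁) (hyz.2 (hxy₁ ▸ hxz))
  antisymm x y hxy hyx := by
    have hxy₁ : x.1 = y.1 := antisymm hxy.1 hyx.1
    exact Prod.ext hxy₁ (antisymm (hxy.2 hxy₁) (hyx.2 hxy₁.symm))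
  total x y := by
    by_cases h : x.1 = y.1
    · exact (total_of s x.2 y.2).imp (fun hs => ⟨h ▸ refl_of r _, fun _ => hs⟩)
        (fun hs => ⟨h ▸ refl_of r _, fun _ => hs⟩)
    · exact (total_of r x.1 y.1).imp (fun hr => ⟨hr, fun h' => absurd h' h⟩)
        (fun hr => ⟨hr, fun h' => absurd h'.symm h⟩)

lemma orderDim_prod_le : orderDim (α × β) ≤ orderDim α + orderDim β := by
  obtain ⟨ιa, ra, hra, hιa⟩ := exists_isRealizer_mk_eq_orderDim α
  obtain ⟨ιb, rb, hrb, hιb⟩ := exists_isRealizer_mk_eq_orderDim β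
  obtain ⟨ta, hta, hta_le⟩ := extend_partialOrder ((· ≤ ·) : α → α → Prop)
  obtain ⟨tb, htb, htb_le⟩ := extend_partialOrder ((· ≤ ·) : β → β → Prop)
  let r : ιa ⊕ ιb → α × β → α × β → Prop := Sum.elim
    (fun i x y => ra i x.1 y.1 ∧ (x.1 = y.1 → tb x.2 y.2))
    (fun j x y => rb j x.2 y.2 ∧ (x.2 = y.2 → ta x.1 y.1))
  have hr : IsRealizer_s16 r := by
    refine ⟨?_, fun x y => ⟨fun h => ?_, fun h => ⟨?_, ?_⟩⟩⟩
    · rintro (i | j)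
      · have := hra.isLinearOrder i
        exact isLinearOrder_lex (ra i) tb
      · have := hrb.isLinearOrder j
        have := isLinearOrder_lex (rb j) ta
        exact Prod.swap_injective.isLinearOrder_onFun
          (fun x y : β × α => rb j x.1 y.1 ∧ (x.1 = y.1 → ta x.2 y.2))
    · rintro (i | j)
      · exact ⟨hra.rel_of_le h.1 i, fun _ => htb_le _ _ h.2⟩
      · exact ⟨hrb.rel_of_le h.2 j, fun _ => hta_le _ _ h.1⟩
    · exact (hra.le_iff _ _).2 fun i => (h (.inl i)).1
    · exact (hrb.le_iff _ _).2 fun j => (h (.inr j)).1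
  calc orderDim (α × β) ≤ #(ιa ⊕ ιb) := orderDim_le_mk_s16 hr
    _ = orderDim α + orderDim β := by rw [mk_sum, lift_id, lift_id, hιa, hιb]

lemma orderDim_le_mk_setOf_top_rel_bot [OrderTop β] [OrderBot β] {ι : Type u}
    {L : ι → α × β → α × β → Prop} (hL : IsRealizer_s16 L) :
    orderDim α ≤ #{k | ∃ a a' : α, a ≠ a' ∧ L k (a, ⊤) (a', ⊥)} := by
  refine orderDim_le_mk_s16 (r := fun k a a' => L k.1 (a, ⊥) (a', ⊥)) ⟨fun k => ?_, fun a a' => ?_⟩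
  · have := hL.isLinearOrder k.1
    exact (Prod.mk_left_injective ⊥).isLinearOrder_onFun (L k.1)
  refine ⟨fun h k => hL.rel_of_le (show (a, ⊥) ≤ (a', (⊥ : β)) from ⟨h, le_rfl⟩) k.1,
    fun h => by_contra fun haa' => ?_⟩
  obtain ⟨k, hk⟩ : ∃ k, ¬L k (a, ⊥) (a', ⊤) := by
    simpa [hL.le_iff] using fun h' : (a, (⊥ : β)) ≤ (a', ⊤) => haa' h'.1
  have := hL.isLinearOrder k
  have hk' : L k (a', ⊤) (a, ⊥) := (total_of (L k) _ _).resolve_left hk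
  have hne : a' ≠ a := fun e => haa' e.ge
  exact hk (trans_of (L k) (h ⟨k, a', a, hne, hk'⟩)
    (hL.rel_of_le (show (a', ⊥) ≤ (a', (⊤ : β)) from ⟨le_rfl, bot_le⟩) k))

lemma disjoint_setOf_top_rel_bot [BoundedOrder α] [BoundedOrder β] {ι : Type*}
    {L : ι → α × β → α × β → Prop} (hL : IsRealizer_s16 L) :
    Disjoint {k | ∃ a a' : α, a ≠ a' ∧ L k (a, ⊤) (a', ⊥)}
      {k | ∃ b b' : β, b ≠ b' ∧ L k (⊤, b) (⊥, b')} := by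
  rw [Set.disjoint_left]
  rintro k ⟨a, a', ha, hk₁⟩ ⟨b, b', -, hk₂⟩
  have := hL.isLinearOrder k
  have h₁ : L k (a', b) (a, b') :=
    trans_of (L k) (hL.rel_of_le (show (a', b) ≤ (⊤, b) from ⟨le_top, le_rfl⟩) k)
      (trans_of (L k) hk₂ (hL.rel_of_le (show (⊥, b') ≤ (a, b') from ⟨bot_le, le_rfl⟩) k))
  have h₂ : L k (a, b') (a', b) :=
    trans_of (L k) (hL.rel_of_le (show (a, b') ≤ (a, ⊤) from ⟨le_rfl, le_top⟩) k)
      (trans_of (L k) hk₁ (hL.rel_of_le (show (a', ⊥) ≤ (a', b) from ⟨le_rfl, bot_le⟩) k))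
  exact ha (congrArg Prod.fst (antisymm h₁ h₂ : (a', b) = (a, b'))).symm

lemma add_le_orderDim_prod [BoundedOrder α] [BoundedOrder β] :
    orderDim α + orderDim β ≤ orderDim (α × β) := by
  obtain ⟨ι, L, hL, hι⟩ := exists_isRealizer_mk_eq_orderDim (α × β)
  calc orderDim α + orderDim β
      ≤ #{k | ∃ a a' : α, a ≠ a' ∧ L k (a, ⊤) (a', ⊥)} +
          #{k | ∃ b b' : β, b ≠ b' ∧ L k (⊤, b) (⊥, b')} :=
        add_le_add (orderDim_le_mk_setOf_top_rel_bot hL) (orderDim_le_mk_setOf_top_rel_bot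
          (hL.comap (OrderIso.prodComm (α := β) (β := α)).toOrderEmbedding))
    _ = #(({k | ∃ a a' : α, a ≠ a' ∧ L k (a, ⊤) (a', ⊥)} ∪
          {k | ∃ b b' : β, b ≠ b' ∧ L k (⊤, b) (⊥, b')} : Set ι)) :=
        (mk_union_of_disjoint (disjoint_setOf_top_rel_bot hL)).symm
    _ ≤ orderDim (α × β) := hι ▸ mk_set_le _

lemma orderDim_prod [BoundedOrder α] [BoundedOrder β] :
    orderDim (α × β) = orderDim α + orderDim β :=
  orderDim_prod_le.antisymm add_le_orderDim_prod

end Product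

section BoundedDimension

variable {α β : Type u} [PartialOrder α] [PartialOrder β]

def Set.Icc.prodOrderIso (x y : α × β) : Icc x y ≃o Icc x.1 y.1 × Icc x.2 y.2 where
  toEquiv := (Equiv.setCongr (Icc_prod_eq x y)).trans (Equiv.Set.prod _ _)
  map_rel_iff' := Iff.rfl

lemma orderDim_Icc_prod {x y : α × β} (h : x ≤ y) :
    orderDim (Icc x y) = orderDim (Icc x.1 y.1) + orderDim (Icc x.2 y.2) := by
  have : Fact (x.1 ≤ y.1) := ⟨h.1⟩
  have : Fact (x.2 ≤ y.2) := ⟨h.2⟩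
  rw [(Set.Icc.prodOrderIso x y).orderDim_eq, orderDim_prod]

lemma orderDim_Icc_le (x y : α) : orderDim (Icc x y) ≤ orderDim α :=
  orderDim_le_of_orderEmbedding (OrderEmbedding.subtype _)

lemma bddAbove_orderDim_Icc (hα : orderDim α < ℵ₀) :
    BddAbove {n : ℕ | ∃ x y : α, x ≤ y ∧ orderDim (Icc x y) = n} := by
  obtain ⟨N, hN⟩ := lt_aleph0.1 hα
  refine ⟨N, ?_⟩
  rintro n ⟨x, y, -, hn⟩
  have h := orderDim_Icc_le x y
  rw [hn, hN] at h
  exact_mod_cast h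

lemma orderDim_Icc_le_bdDim (hα : orderDim α < ℵ₀) {x y : α} (h : x ≤ y) :
    orderDim (Icc x y) ≤ bdDim α := by
  obtain ⟨n, hn⟩ := lt_aleph0.1 ((orderDim_Icc_le x y).trans_lt hα)
  rw [hn, Nat.cast_le]
  exact le_csSup (bddAbove_orderDim_Icc hα) ⟨x, y, h, hn⟩

lemma bdDim_le {n : ℕ} (h : ∀ x y : α, x ≤ y → orderDim (Icc x y) ≤ n) : bdDim α ≤ n := by
  refine csSup_le' ?_
  rintro m ⟨x, y, hxy, hm⟩
  exact_mod_cast hm ▸ h x y hxy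

lemma exists_orderDim_Icc_eq_bdDim [Nonempty α] (hα : orderDim α < ℵ₀) :
    ∃ x y : α, x ≤ y ∧ orderDim (Icc x y) = bdDim α := by
  obtain ⟨x⟩ := ‹Nonempty α›
  obtain ⟨n, hn⟩ := lt_aleph0.1 ((orderDim_Icc_le x x).trans_lt hα)
  exact Nat.sSup_mem (by exact ⟨n, x, x, le_rfl, hn⟩) (bddAbove_orderDim_Icc hα)

end BoundedDimension

theorem stmt16 (P Q : Type u) [PartialOrder P] [Nonempty P] [PartialOrder Q] [Nonempty Q]
    (hP : orderDim P < Cardinal.aleph0) (hQ : orderDim Q < Cardinal.aleph0) :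
    bdDim (P × Q) = bdDim P + bdDim Q := by
  have hPQ : orderDim (P × Q) < ℵ₀ := orderDim_prod_le.trans_lt (add_lt_aleph0 hP hQ)
  obtain ⟨p, p', hp, hp_dim⟩ := exists_orderDim_Icc_eq_bdDim hP
  obtain ⟨q, q', hq, hq_dim⟩ := exists_orderDim_Icc_eq_bdDim hQ
  apply le_antisymm
  · refine bdDim_le fun x y hxy => ?_
    rw [orderDim_Icc_prod hxy, Nat.cast_add]
    exact add_le_add (orderDim_Icc_le_bdDim hP hxy.1) (orderDim_Icc_le_bdDim hQ hxy.2)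
  · have hpq : (p, q) ≤ (p', q') := ⟨hp, hq⟩
    have h := orderDim_Icc_le_bdDim hPQ hpq
    rw [orderDim_Icc_prod hpq, hp_dim, hq_dim] at h
    exact_mod_cast h
end
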